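/- arXiv:2605.25448 — 4 statements merged into one kernel-verified Lean document; each statement's English description precedes it below -/
import Mathlib

section
/- Fix x ∈ Ω and s ∈ [0,1], and assume that the function y ↦ c(x,y) − ψ_s(y) has a unique minimizer T over Ω. Then the function u ↦ φ_u(x) on [0,1] has, at u = s, right derivative equal to −v(T) when s < 1 and left derivative equal to −v(T) when s > 0; in particular, if s ∈ (0,1) it is differentiable at s with derivative −v(T). -/
/-- `phiPot c ψ0 v s x = min_{y} (c x y - (ψ0 y + s v y))`, i.e. the `c`-transform of
`ψ_s = ψ0 + s v` evaluated at `x` (the minimum equals the infimum by compactness). -/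
noncomputable def phiPot {Ω : Type*} (c : Ω → Ω → ℝ) (ψ0 v : Ω → ℝ) (s : ℝ) (x : Ω) : ℝ :=
  ⨅ y : Ω, (c x y - (ψ0 y + s * v y))

/-- if `y ↦ c(x,y) - ψ_s(y)` has a unique minimizer `T`, then `u ↦ φ_u(x)`,
viewed as a function on `[0,1]`, has right derivative `-v(T)` at `s` when `s < 1`,
left derivative `-v(T)` at `s` when `0 < s`, and is differentiable at `s` with derivative
`-v(T)` when `s ∈ (0,1)`. -/
theorem stmt1 {Ω : Type*} [MetricSpace Ω] [CompactSpace Ω] [Nonempty Ω]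
    (c : Ω → Ω → ℝ) (hc : Continuous fun p : Ω × Ω => c p.1 p.2)
    (ψ0 ψ1 : Ω → ℝ) (hψ0 : Continuous ψ0) (hψ1 : Continuous ψ1)
    (v : Ω → ℝ) (hv : ∀ y, v y = ψ1 y - ψ0 y)
    (x : Ω) (s : ℝ) (hs : s ∈ Set.Icc (0 : ℝ) 1)
    (T : Ω)
    (hTmin : ∀ y : Ω, c x T - (ψ0 T + s * v T) ≤ c x y - (ψ0 y + s * v y))
    (hTuniq : ∀ y : Ω,
      c x y - (ψ0 y + s * v y) = c x T - (ψ0 T + s * v T) → y = T) :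
    (s < 1 → HasDerivWithinAt (fun u => phiPot c ψ0 v u x) (-(v T)) (Set.Icc s 1) s) ∧
    (0 < s → HasDerivWithinAt (fun u => phiPot c ψ0 v u x) (-(v T)) (Set.Icc 0 s) s) ∧
    (0 < s → s < 1 →
      HasDerivWithinAt (fun u => phiPot c ψ0 v u x) (-(v T)) (Set.Icc (0 : ℝ) 1) s) := by
  set F : ℝ → Ω → ℝ := fun u y => c x y - (ψ0 y + u * v y) with hF
  have hvC : Continuous v := by
    have hveq : v = fun y => ψ1 y - ψ0 y := funext hv
    rw [hveq]; exact hψ1.sub hψ0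
  have hcx : Continuous fun y => c x y := hc.comp (continuous_const.prodMk continuous_id)
  have hFC : ∀ u : ℝ, Continuous (F u) := fun u =>
    hcx.sub (hψ0.add (continuous_const.mul hvC))
  have hmin : ∀ u : ℝ, ∃ y : Ω, ∀ z, F u y ≤ F u z := by
    intro u
    obtain ⟨y, -, hy⟩ := isCompact_univ.exists_isMinOn Set.univ_nonempty (hFC u).continuousOn
    exact ⟨y, fun z => hy (Set.mem_univ z)⟩
  have hg : ∀ (u : ℝ) (y : Ω), (∀ z, F u y ≤ F u z) → phiPot c ψ0 v u x = F u y := by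
    intro u y hy
    refine le_antisymm (ciInf_le ⟨F u y, ?_⟩ y) (le_ciInf hy)
    rintro b ⟨z, rfl⟩; exact hy z
  have hgs : phiPot c ψ0 v s x = F s T := hg s T hTmin
  obtain ⟨yM, -, hyM⟩ :=
    isCompact_univ.exists_isMaxOn Set.univ_nonempty hvC.abs.continuousOn
  set M := |v yM| with hM
  have hMb : ∀ y, |v y| ≤ M := fun y => hyM (Set.mem_univ y)
  have hM0 : (0 : ℝ) ≤ M := abs_nonneg _
  have hFrel : ∀ (u : ℝ) (z : Ω), F u z = F s z - (u - s) * v z := by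
    intro u z; simp only [hF]; ring
  have key : ∀ ε > (0:ℝ), ∃ δ > (0:ℝ), ∀ u : ℝ, |u - s| < δ →
      ∀ y, (∀ z, F u y ≤ F u z) → |v y - v T| < ε := by
    intro ε hε
    set A : Set Ω := {y | ε ≤ |v y - v T|} with hA
    by_cases hAne : A.Nonempty
    · have hAclosed : IsClosed A :=
        isClosed_le continuous_const (hvC.sub continuous_const).abs
      obtain ⟨y0, hy0A, hy0⟩ := hAclosed.isCompact.exists_isMinOn hAne
        ((hFC s).continuousOn)
      have hy0T : y0 ≠ T := by
        intro h
        rw [h] at hy0A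
        simp only [hA, Set.mem_setOf_eq, sub_self, abs_zero] at hy0A
        linarith
      have hη : 0 < F s y0 - F s T := by
        rcases lt_or_eq_of_le (hTmin y0) with h | h
        · have h' : F s T < F s y0 := h
          linarith
        · exact absurd (hTuniq y0 h.symm) hy0T
      set η := F s y0 - F s T with hηdef
      refine ⟨η / (2 * M + 2), by positivity, fun u hu y hy => ?_⟩
      by_contra hcon
      have hyA : y ∈ A := not_lt.mp hcon
      have h2 : F s y0 ≤ F s y := hy0 hyA
      have h3 : F u y ≤ F u T := hy T
      rw [hFrel u y, hFrel u T] at h3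
      have h4 : (u - s) * (v y - v T) ≤ |u - s| * (2 * M) := by
        calc (u - s) * (v y - v T) ≤ |(u - s) * (v y - v T)| := le_abs_self _
          _ = |u - s| * |v y - v T| := abs_mul _ _
          _ ≤ |u - s| * (2 * M) := by
              have : |v y - v T| ≤ |v y| + |v T| := abs_sub _ _
              nlinarith [hMb y, hMb T, abs_nonneg (u - s)]
      have h5 : η ≤ (u - s) * (v y - v T) := by
        have : η ≤ F s y - F s T := by linarith
        linarith
      have h6 : |u - s| * (2 * M + 2) < η := (lt_div_iff₀ (by positivity)).mp hu
      nlinarith [abs_nonneg (u - s)]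
    · refine ⟨1, one_pos, fun u _ y _ => ?_⟩
      by_contra hcon
      exact hAne ⟨y, not_lt.mp hcon⟩
  have hd : HasDerivAt (fun u => phiPot c ψ0 v u x) (-(v T)) s := by
    rw [hasDerivAt_iff_isLittleO, Asymptotics.isLittleO_iff]
    intro ε hε
    obtain ⟨δ, hδ, hkey⟩ := key ε hε
    rw [Metric.eventually_nhds_iff]
    refine ⟨δ, hδ, fun u hu => ?_⟩
    rw [Real.dist_eq] at hu
    obtain ⟨yu, hyu⟩ := hmin u
    have hgu : phiPot c ψ0 v u x = F u yu := hg u yu hyu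
    have hub : phiPot c ψ0 v u x ≤ F s T - (u - s) * v T := by
      rw [hgu]
      calc F u yu ≤ F u T := hyu T
        _ = F s T - (u - s) * v T := hFrel u T
    have hlb : F s T - (u - s) * v yu ≤ phiPot c ψ0 v u x := by
      rw [hgu, hFrel u yu]
      have : F s T ≤ F s yu := hTmin yu
      linarith
    have hclose : |v yu - v T| < ε := hkey u hu yu hyu
    have habs : (u - s) * (v T - v yu) ≥ -(ε * |u - s|) := by
      have h1 : (u - s) * (v T - v yu) ≥ -|(u - s) * (v T - v yu)| := neg_abs_le _
      have h2 : |(u - s) * (v T - v yu)| = |u - s| * |v T - v yu| := abs_mul _ _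
      have h3 : |v T - v yu| < ε := by rw [abs_sub_comm]; exact hclose
      nlinarith [abs_nonneg (u - s)]
    simp only [Real.norm_eq_abs, smul_eq_mul, hgs]
    rw [abs_le]
    constructor <;> nlinarith [abs_nonneg (u - s)]
  exact ⟨fun _ => hd.hasDerivWithinAt, fun _ => hd.hasDerivWithinAt,
    fun _ _ => hd.hasDerivWithinAt⟩
end

section
/- Let G, B > 0 and let g : [0,1] → ℝ be Lebesgue measurable with 0 ≤ g(s) ≤ G for all s ∈ [0,1] and ∫_0^1 g(s) ds ≥ B. Set δ := min(1/2, B/(2G)). Then ∫_0^1 s · g(s)² ds ≥ B² / (4 · log(1/δ)). -/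
open MeasureTheory intervalIntegral


/-- if `g : [0,1] → ℝ` is measurable with `0 ≤ g ≤ G` and `∫_0^1 g ≥ B`, then,
with `δ := min (1/2) (B/(2G))`, one has `∫_0^1 s g(s)² ds ≥ B² / (4 log(1/δ))`. -/
theorem stmt5 (G B : ℝ) (hG : 0 < G) (hB : 0 < B)
    (g : ℝ → ℝ) (hmeas : Measurable g)
    (hbound : ∀ s ∈ Set.Icc (0 : ℝ) 1, 0 ≤ g s ∧ g s ≤ G)
    (hint : B ≤ ∫ s in (0 : ℝ)..1, g s) :
    B ^ 2 / (4 * Real.log (1 / min (1 / 2) (B / (2 * G))))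
      ≤ ∫ s in (0 : ℝ)..1, s * g s ^ 2 := by
  set δ : ℝ := min (1 / 2) (B / (2 * G)) with hδdef
  have hδpos : 0 < δ := lt_min (by norm_num) (div_pos hB (by positivity))
  have hδhalf : δ ≤ 1 / 2 := min_le_left _ _
  have hδ1 : δ ≤ 1 := hδhalf.trans (by norm_num)
  have hL : 0 < Real.log (1 / δ) := by
    apply Real.log_pos
    rw [lt_div_iff₀ hδpos]
    linarith
  set L : ℝ := Real.log (1 / δ) with hLdef
  -- integrability of g on subintervals of [0,1]
  have hgint : ∀ a b : ℝ, 0 ≤ a → a ≤ b → b ≤ 1 → IntervalIntegrable g volume a b := by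
    intro a b ha hab hb
    apply IntervalIntegrable.mono_fun' (g := fun _ => G)
    · exact intervalIntegrable_const
    · exact hmeas.aestronglyMeasurable
    · rw [Filter.EventuallyLE, ae_restrict_iff' measurableSet_uIoc]
      filter_upwards with x hx
      rw [Set.uIoc_of_le hab] at hx
      have := hbound x ⟨ha.trans hx.1.le, hx.2.trans hb⟩
      rw [Real.norm_of_nonneg this.1]; exact this.2
  -- integrability of s*g² on subintervals of [0,1]
  have hsgint : ∀ a b : ℝ, 0 ≤ a → a ≤ b → b ≤ 1 →
      IntervalIntegrable (fun s => s * g s ^ 2) volume a b := by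
    intro a b ha hab hb
    apply IntervalIntegrable.mono_fun' (g := fun _ => G ^ 2)
    · exact intervalIntegrable_const
    · exact ((measurable_id.mul (hmeas.pow_const 2)).aestronglyMeasurable)
    · rw [Filter.EventuallyLE, ae_restrict_iff' measurableSet_uIoc]
      filter_upwards with x hx
      rw [Set.uIoc_of_le hab] at hx
      have h01 : x ∈ Set.Icc (0:ℝ) 1 := ⟨ha.trans hx.1.le, hx.2.trans hb⟩
      have := hbound x h01
      have hx0 : 0 ≤ x := h01.1
      have hx1 : x ≤ 1 := h01.2
      rw [Real.norm_of_nonneg (by positivity)]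
      nlinarith [this.1, this.2]
  -- step 1 : ∫_δ^1 g ≥ B/2
  have hsplit : (∫ s in (0:ℝ)..1, g s) = (∫ s in (0:ℝ)..δ, g s) + ∫ s in δ..1, g s :=
    (integral_add_adjacent_intervals (hgint 0 δ le_rfl hδpos.le hδ1)
      (hgint δ 1 hδpos.le hδ1 le_rfl)).symm
  have hsmall : (∫ s in (0:ℝ)..δ, g s) ≤ B / 2 := by
    have h1 : (∫ s in (0:ℝ)..δ, g s) ≤ ∫ s in (0:ℝ)..δ, G := by
      apply integral_mono_on hδpos.le (hgint 0 δ le_rfl hδpos.le hδ1) intervalIntegrable_const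
      intro x hx
      exact (hbound x ⟨hx.1, hx.2.trans hδ1⟩).2
    have h2 : (∫ s in (0:ℝ)..δ, (G:ℝ)) = G * δ := by simp [mul_comm]
    have h3 : G * δ ≤ B / 2 := by
      have : δ ≤ B / (2 * G) := min_le_right _ _
      calc G * δ ≤ G * (B / (2 * G)) := by nlinarith
        _ = B / 2 := by field_simp
    linarith
  have hbig : B / 2 ≤ ∫ s in δ..1, g s := by linarith
  -- Cauchy-Schwarz on Ioc δ 1
  set μ : Measure ℝ := volume.restrict (Set.Ioc δ 1) with hμ
  have hfin : IsFiniteMeasure μ := by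
    constructor
    simp [hμ, Real.volume_Ioc]
  have hmem1 : MemLp (fun s => Real.sqrt s * g s) (ENNReal.ofReal 2) μ := by
    apply MemLp.of_bound ((Real.continuous_sqrt.measurable.mul hmeas).aestronglyMeasurable) G
    rw [ae_restrict_iff' measurableSet_Ioc]
    filter_upwards with x hx
    have h01 : x ∈ Set.Icc (0:ℝ) 1 := ⟨hδpos.le.trans hx.1.le, hx.2⟩
    have hb := hbound x h01
    have hs : Real.sqrt x ≤ 1 := Real.sqrt_le_one.2 h01.2
    show ‖Real.sqrt x * g x‖ ≤ G
    rw [Real.norm_of_nonneg (mul_nonneg (Real.sqrt_nonneg _) hb.1)]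
    nlinarith [Real.sqrt_nonneg x, hb.1, hb.2]
  have hmem2 : MemLp (fun s => 1 / Real.sqrt s) (ENNReal.ofReal 2) μ := by
    apply MemLp.of_bound ((measurable_const.div Real.continuous_sqrt.measurable).aestronglyMeasurable)
      (1 / Real.sqrt δ)
    rw [ae_restrict_iff' measurableSet_Ioc]
    filter_upwards with x hx
    have hsx : 0 < Real.sqrt x := Real.sqrt_pos.2 (hδpos.trans hx.1)
    show ‖1 / Real.sqrt x‖ ≤ 1 / Real.sqrt δ
    rw [Real.norm_of_nonneg (by positivity)]
    exact one_div_le_one_div_of_le (Real.sqrt_pos.2 hδpos)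
      (Real.sqrt_le_sqrt hx.1.le)
  set I : ℝ := ∫ s in δ..1, s * g s ^ 2 with hI
  have hInn : 0 ≤ I := by
    rw [hI]
    apply integral_nonneg hδ1
    intro x hx
    have h0 : (0:ℝ) ≤ x := hδpos.le.trans hx.1
    positivity
  have key : (∫ s, (Real.sqrt s * g s) * (1 / Real.sqrt s) ∂μ)
      ≤ (∫ s, (Real.sqrt s * g s) ^ (2:ℝ) ∂μ) ^ (1/(2:ℝ))
        * (∫ s, (1 / Real.sqrt s) ^ (2:ℝ) ∂μ) ^ (1/(2:ℝ)) := by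
    apply integral_mul_le_Lp_mul_Lq_of_nonneg
      (⟨by norm_num, by norm_num, by norm_num⟩ : Real.HolderConjugate 2 2) _ _ hmem1 hmem2
    · rw [Filter.EventuallyLE, ae_restrict_iff' measurableSet_Ioc]
      filter_upwards with x hx
      exact mul_nonneg (Real.sqrt_nonneg _) (hbound x ⟨hδpos.le.trans hx.1.le, hx.2⟩).1
    · filter_upwards with x
      positivity
  -- identify the three integrals
  have e1 : (∫ s, (Real.sqrt s * g s) * (1 / Real.sqrt s) ∂μ) = ∫ s in δ..1, g s := by
    rw [intervalIntegral.integral_of_le hδ1, hμ]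
    apply setIntegral_congr_fun measurableSet_Ioc
    intro x hx
    have hsx : 0 < Real.sqrt x := Real.sqrt_pos.2 (hδpos.trans hx.1)
    field_simp
  have e2 : (∫ s, (Real.sqrt s * g s) ^ (2:ℝ) ∂μ) = I := by
    rw [hI, intervalIntegral.integral_of_le hδ1, hμ]
    apply setIntegral_congr_fun measurableSet_Ioc
    intro x hx
    have hx0 : (0:ℝ) ≤ x := (hδpos.trans hx.1).le
    have hg0 : 0 ≤ g x := (hbound x ⟨hx0, hx.2⟩).1
    simp only [show ((2:ℝ)) = ((2:ℕ):ℝ) by norm_num, Real.rpow_natCast]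
    rw [mul_pow, Real.sq_sqrt hx0]
  have e3 : (∫ s, (1 / Real.sqrt s) ^ (2:ℝ) ∂μ) = L := by
    have : (∫ s, (1 / Real.sqrt s) ^ (2:ℝ) ∂μ) = ∫ s in δ..1, 1 / s := by
      rw [intervalIntegral.integral_of_le hδ1, hμ]
      apply setIntegral_congr_fun measurableSet_Ioc
      intro x hx
      have hx0 : (0:ℝ) < x := hδpos.trans hx.1
      simp only [show ((2:ℝ)) = ((2:ℕ):ℝ) by norm_num, Real.rpow_natCast]
      rw [div_pow, one_pow, Real.sq_sqrt hx0.le]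
    rw [this, integral_one_div (by
      intro h
      rcases Set.mem_uIcc.1 h with h | h
      · exact absurd h.1 (not_le.2 hδpos)
      · linarith [h.2]), hLdef]
  rw [e1, e2, e3] at key
  -- square the inequality
  have hsq : (B / 2) ^ 2 ≤ I * L := by
    have h1 : B / 2 ≤ I ^ (1/(2:ℝ)) * L ^ (1/(2:ℝ)) := le_trans hbig key
    have h2 : (I ^ (1/(2:ℝ)) * L ^ (1/(2:ℝ))) ^ 2 = I * L := by
      rw [mul_pow, ← Real.rpow_natCast (I ^ (1/(2:ℝ))) 2, ← Real.rpow_natCast (L ^ (1/(2:ℝ))) 2,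
        ← Real.rpow_mul hInn, ← Real.rpow_mul hL.le]
      norm_num
    nlinarith [Real.rpow_nonneg hInn (1/(2:ℝ)), Real.rpow_nonneg hL.le (1/(2:ℝ))]
  have hfinal : B ^ 2 / (4 * L) ≤ I := by
    rw [div_le_iff₀ (by positivity)]
    nlinarith
  -- extend the integral to [0,1]
  have hsplit2 : (∫ s in (0:ℝ)..1, s * g s ^ 2)
      = (∫ s in (0:ℝ)..δ, s * g s ^ 2) + I :=
    (integral_add_adjacent_intervals (hsgint 0 δ le_rfl hδpos.le hδ1)
      (hsgint δ 1 hδpos.le hδ1 le_rfl)).symm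
  have hpos2 : 0 ≤ ∫ s in (0:ℝ)..δ, s * g s ^ 2 := by
    apply integral_nonneg hδpos.le
    intro x hx
    have h0 : (0:ℝ) ≤ x := hx.1
    positivity
  rw [hsplit2]
  calc B ^ 2 / (4 * L) ≤ I := hfinal
    _ ≤ _ := by linarith
end

section
/- Assume Ω has diameter at most D and that its covering numbers satisfy N(Ω, r) ≤ C·r^{−n} for all r ∈ (0,1), where C ≥ 1 and n ≥ 1. Then there exists a constant C' > 0, depending only on C, n and D, such that for every ε ∈ (0,1/2) there is a finite set S of Borel probability measures on Ω with log|S| ≤ C'·ε^{−n}·log(C'/ε) and with the property that every Borel probability measure μ on Ω satisfies W2²(μ, ν) ≤ ε² for some ν ∈ S. -/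
open MeasureTheory

/-- The squared `2`-Wasserstein "distance" (with cost `d²/2`), defined as the infimum over
couplings of the integral of the quadratic cost. -/
noncomputable def W2sq {Ω : Type*} [MetricSpace Ω] [MeasurableSpace Ω]
    (μ ν : Measure Ω) : ℝ :=
  sInf {r : ℝ | ∃ π : Measure (Ω × Ω), IsProbabilityMeasure π ∧
    π.map Prod.fst = μ ∧ π.map Prod.snd = ν ∧ r = ∫ p, dist p.1 p.2 ^ 2 / 2 ∂π}

open Metric Set
open scoped ENNReal NNReal

lemma integrable_of_bdd {X : Type*} [MeasurableSpace X] {ρ : Measure X}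
    (hρ : ρ Set.univ ≤ 1) {f : X → ℝ} (hf : AEStronglyMeasurable f ρ) (B : ℝ)
    (hB : ∀ x, |f x| ≤ B) : Integrable f ρ := by
  haveI : IsFiniteMeasure ρ := ⟨lt_of_le_of_lt hρ (by norm_num)⟩
  exact (integrable_const B).mono' hf (ae_of_all _ (by simpa using hB))

lemma measure_decomp {Ω : Type*} [MeasurableSpace Ω] (μ : Measure Ω) {K : ℕ}
    (A : Fin K → Set Ω) (hAm : ∀ i, MeasurableSet (A i))
    (hAd : Pairwise (Function.onFun Disjoint A)) (hAu : (⋃ i, A i) = Set.univ) :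
    (∑ i, μ.restrict (A i)) = μ := by
  ext s hs
  rw [Measure.finset_sum_apply]
  simp only [Measure.restrict_apply hs]
  have h1 : (⋃ i, s ∩ A i) = s := by rw [← Set.inter_iUnion, hAu, Set.inter_univ]
  have h2 : μ (⋃ i, s ∩ A i) = ∑' i, μ (s ∩ A i) := by
    refine measure_iUnion ?_ fun i => hs.inter (hAm i)
    exact fun i j hij => (hAd hij).mono inter_subset_right inter_subset_right
  rw [h1] at h2
  rw [h2, tsum_fintype]

lemma partition_exists {Ω : Type*} [MetricSpace Ω] [MeasurableSpace Ω] [BorelSpace Ω]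
    {K : ℕ} (y : Fin K → Ω) (r : ℝ)
    (hnet : ∀ x : Ω, ∃ i, dist x (y i) < r) :
    ∃ A : Fin K → Set Ω, (∀ i, MeasurableSet (A i)) ∧
      Pairwise (Function.onFun Disjoint A) ∧ (⋃ i, A i) = Set.univ ∧
      ∀ i, A i ⊆ ball (y i) r := by
  classical
  set B : ℕ → Set Ω := fun j => if h : j < K then ball (y ⟨j, h⟩) r else ∅ with hB
  set A0 : ℕ → Set Ω := disjointed B with hA0
  have hBm : ∀ j, MeasurableSet (B j) := by
    intro j; rw [hB]; dsimp only; split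
    · exact measurableSet_ball
    · exact MeasurableSet.empty
  have hA0m : ∀ j, MeasurableSet (A0 j) := MeasurableSet.disjointed hBm
  have hA0d : Pairwise (Function.onFun Disjoint A0) := disjoint_disjointed B
  have hA0sub : ∀ j, A0 j ⊆ B j := fun j => disjointed_subset B j
  have hA0u : (⋃ j, A0 j) = Set.univ := by
    rw [hA0, iUnion_disjointed]
    apply Set.eq_univ_of_forall
    intro x
    obtain ⟨i, hi⟩ := hnet x
    refine Set.mem_iUnion.2 ⟨i.val, ?_⟩
    rw [hB]; simp only [i.isLt, dif_pos]
    simpa [Fin.eta] using mem_ball.2 hi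
  refine ⟨fun i => A0 i.val, fun i => hA0m i.val, ?_, ?_, ?_⟩
  · intro i j hij
    exact hA0d (fun h => hij (Fin.val_injective h))
  · apply Set.eq_univ_of_forall
    intro x
    obtain ⟨j, hj⟩ := Set.mem_iUnion.1 (by rw [hA0u]; exact Set.mem_univ x)
    have hjK : j < K := by
      by_contra h
      have : B j = ∅ := by rw [hB]; simp [h]
      exact absurd (hA0sub j hj) (by simp [this])
    exact Set.mem_iUnion.2 ⟨⟨j, hjK⟩, hj⟩
  · intro i x hx
    have := hA0sub i.val hx
    rw [hB] at this
    simpa [i.isLt, Fin.eta] using this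

lemma net_core {Ω : Type} [MetricSpace Ω] [CompactSpace Ω] [Nonempty Ω]
    [MeasurableSpace Ω] [BorelSpace Ω] (D : ℝ) (hD : 0 < D)
    (hdiam : Metric.diam (Set.univ : Set Ω) ≤ D)
    (r : ℝ) (hr : 0 < r) (F : Finset Ω)
    (hFnet : ∀ x : Ω, ∃ y ∈ F, dist x y < r) (m : ℕ) (hm : 0 < m) :
    ∃ S : Finset (Measure Ω), (∀ ν ∈ S, IsProbabilityMeasure ν) ∧
      S.card ≤ (m + 1) ^ F.card ∧
      ∀ μ : Measure Ω, IsProbabilityMeasure μ → ∃ ν ∈ S,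
        W2sq μ ν ≤ r ^ 2 / 2 + (F.card : ℝ) / m * (D ^ 2 / 2) := by
  classical
  set K := F.card with hKdef
  set y : Fin K → Ω := fun i => ((F.equivFin.symm i : F) : Ω) with hy
  have hynet : ∀ x : Ω, ∃ i, dist x (y i) < r := by
    intro x
    obtain ⟨z, hz, hdz⟩ := hFnet x
    refine ⟨F.equivFin ⟨z, hz⟩, ?_⟩
    simp only [hy, Equiv.symm_apply_apply]
    exact hdz
  have hK0 : 0 < K := (hynet (Classical.arbitrary Ω)).choose.pos
  set y0 : Ω := y ⟨0, hK0⟩ with hy0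
  obtain ⟨A, hAm, hAd, hAu, hAb⟩ := partition_exists y r hynet
  have hmE : (m : ℝ≥0∞) ≠ 0 := by exact_mod_cast hm.ne'
  have hmE' : (m : ℝ≥0∞) ≠ ∞ := ENNReal.natCast_ne_top m
  -- the candidate measures
  set νof : (Fin K → ℕ) → Measure Ω := fun t =>
    (∑ i, ((t i : ℝ≥0∞) / (m : ℝ≥0∞)) • Measure.dirac (y i)) +
      (1 - ∑ i, ((t i : ℝ≥0∞) / (m : ℝ≥0∞))) • Measure.dirac y0 with hνof
  set T : Finset (Fin K → ℕ) :=
    (Fintype.piFinset fun _ : Fin K => Finset.range (m + 1)).filter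
      (fun t => ∑ i, t i ≤ m) with hT
  refine ⟨T.image νof, ?_, ?_, ?_⟩
  · -- all probability measures
    intro ν hν
    obtain ⟨t, ht, rfl⟩ := Finset.mem_image.1 hν
    have htm : ∑ i, t i ≤ m := (Finset.mem_filter.1 ht).2
    have hqle : (∑ i, ((t i : ℝ≥0∞) / (m : ℝ≥0∞))) ≤ 1 := by
      simp only [div_eq_mul_inv, ← Finset.sum_mul]
      rw [← div_eq_mul_inv]
      refine ENNReal.div_le_of_le_mul ?_
      rw [one_mul]
      calc (∑ i, (t i : ℝ≥0∞)) = ((∑ i, t i : ℕ) : ℝ≥0∞) := by push_cast; rfl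
        _ ≤ (m : ℝ≥0∞) := by exact_mod_cast htm
    constructor
    rw [hνof]
    simp only [Measure.add_apply, Measure.smul_apply, Measure.finset_sum_apply,
      Measure.dirac_apply' _ MeasurableSet.univ, Set.indicator_univ, Pi.one_apply,
      smul_eq_mul, mul_one]
    exact add_tsub_cancel_of_le hqle
  · -- cardinality
    refine Finset.card_image_le.trans ?_
    refine (Finset.card_filter_le _ _).trans ?_
    rw [Fintype.card_piFinset]
    simp [Finset.card_range]
  · -- the net property
    intro μ hμ
    set w : Fin K → ℝ≥0∞ := fun i => μ (A i) with hw
    have hw1 : ∀ i, w i ≤ 1 := fun i => prob_le_one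
    have hwfin : ∀ i, w i ≠ ∞ := fun i => (lt_of_le_of_lt (hw1 i) ENNReal.one_lt_top).ne
    have hwsum : ∑ i, w i = 1 := by
      have h := congrArg (fun ρ : Measure Ω => ρ Set.univ) (measure_decomp μ A hAm hAd hAu)
      simpa [Measure.finset_sum_apply, Measure.restrict_apply_univ, measure_univ, hw]
        using h
    set wr : Fin K → ℝ := fun i => (w i).toReal with hwr
    have hwr0 : ∀ i, 0 ≤ wr i := fun i => ENNReal.toReal_nonneg
    have hwr1 : ∀ i, wr i ≤ 1 := fun i => by
      simpa using ENNReal.toReal_mono ENNReal.one_ne_top (hw1 i)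
    have hwrsum : ∑ i, wr i = 1 := by
      rw [hwr]
      simp only []
      rw [← ENNReal.toReal_sum (fun i _ => hwfin i), hwsum, ENNReal.toReal_one]
    set k : Fin K → ℕ := fun i => ⌊(m : ℝ) * wr i⌋₊ with hk
    have hk_le : ∀ i, (k i : ℝ) ≤ m * wr i := fun i =>
      Nat.floor_le (by positivity)
    have hk_lt : ∀ i, (m : ℝ) * wr i < k i + 1 := fun i => Nat.lt_floor_add_one _
    have hkm : ∀ i, k i ≤ m := by
      intro i
      have h2 : (m : ℝ) * wr i ≤ m * 1 :=
        mul_le_mul_of_nonneg_left (hwr1 i) (Nat.cast_nonneg m)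
      have : (k i : ℝ) ≤ m := (hk_le i).trans (by linarith)
      exact_mod_cast this
    have hksum : ∑ i, k i ≤ m := by
      have : ((∑ i, k i : ℕ) : ℝ) ≤ m := by
        push_cast
        calc ∑ i, (k i : ℝ) ≤ ∑ i, (m : ℝ) * wr i := Finset.sum_le_sum fun i _ => hk_le i
          _ = m * ∑ i, wr i := by rw [Finset.mul_sum]
          _ = m := by rw [hwrsum, mul_one]
      exact_mod_cast this
    have hkT : k ∈ T := by
      rw [hT, Finset.mem_filter]
      refine ⟨Fintype.mem_piFinset.2 fun i => Finset.mem_range.2 ?_, hksum⟩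
      exact Nat.lt_succ_of_le (hkm i)
    set q : Fin K → ℝ≥0∞ := fun i => (k i : ℝ≥0∞) / (m : ℝ≥0∞) with hq
    have hq_w : ∀ i, q i ≤ w i := by
      intro i
      refine ENNReal.div_le_of_le_mul ?_
      have h1 : ((k i : ℕ) : ℝ≥0∞) = ENNReal.ofReal (k i) := by
        rw [ENNReal.ofReal_natCast]
      have h2 : w i * (m : ℝ≥0∞) = ENNReal.ofReal (wr i * m) := by
        rw [ENNReal.ofReal_mul (hwr0 i), ENNReal.ofReal_toReal (hwfin i),
          ENNReal.ofReal_natCast]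
      rw [h1, h2]
      exact ENNReal.ofReal_le_ofReal (by linarith [hk_le i])
    have hqfin : ∀ i, q i ≠ ∞ := fun i =>
      ((hq_w i).trans_lt ((hw1 i).trans_lt ENNReal.one_lt_top)).ne
    have hqsum_le : ∑ i, q i ≤ 1 := (Finset.sum_le_sum fun i _ => hq_w i).trans hwsum.le
    have hqsumfin : ∑ i, q i ≠ ∞ := (lt_of_le_of_lt hqsum_le ENNReal.one_lt_top).ne
    set c : Fin K → ℝ≥0∞ := fun i => q i / w i with hc
    have hc1 : ∀ i, c i ≤ 1 := fun i =>
      ENNReal.div_le_of_le_mul (by rw [one_mul]; exact hq_w i)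
    have hcfin : ∀ i, c i ≠ ∞ := fun i => (lt_of_le_of_lt (hc1 i) ENNReal.one_lt_top).ne
    have hcw : ∀ i, c i * w i = q i := by
      intro i
      by_cases hwi : w i = 0
      · have hqi : q i = 0 := le_antisymm (hwi ▸ hq_w i) zero_le
        simp [hc, hwi, hqi]
      · exact ENNReal.div_mul_cancel hwi (hwfin i)
    have h1cw : ∀ i, (1 - c i) * w i = w i - q i := by
      intro i
      rw [ENNReal.sub_mul (fun _ _ => hwfin i), one_mul, hcw]
    have hE : ∑ i, (1 - c i) * w i = 1 - ∑ i, q i := by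
      have h1 : (∑ i, (1 - c i) * w i) + ∑ i, q i = 1 := by
        rw [← Finset.sum_add_distrib]
        rw [Finset.sum_congr rfl (fun i _ => by
          rw [h1cw i, tsub_add_cancel_of_le (hq_w i)])]
        exact hwsum
      have h2 : (1 - ∑ i, q i) + ∑ i, q i = 1 := tsub_add_cancel_of_le hqsum_le
      have h3 := h1.trans h2.symm
      rw [add_comm _ (∑ i, q i), add_comm _ (∑ i, q i)] at h3
      exact (ENNReal.add_right_inj hqsumfin).1 h3
    -- the coupling
    have hmeas_pair : ∀ z : Ω, Measurable (fun x : Ω => (x, z)) := fun z =>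
      measurable_id.prodMk measurable_const
    set π : Measure (Ω × Ω) := ∑ i,
      ((c i • μ.restrict (A i)).map (fun x => (x, y i)) +
        ((1 - c i) • μ.restrict (A i)).map (fun x => (x, y0))) with hπ
    have hπfst : π.map Prod.fst = μ := by
      ext s hs
      rw [Measure.map_apply measurable_fst hs, hπ, Measure.finset_sum_apply]
      have hterm : ∀ i : Fin K,
          (((c i • μ.restrict (A i)).map (fun x => (x, y i)) +
            ((1 - c i) • μ.restrict (A i)).map (fun x => (x, y0))))
            (Prod.fst ⁻¹' s) = μ.restrict (A i) s := by
        intro i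
        rw [Measure.add_apply,
          Measure.map_apply (hmeas_pair (y i)) (measurable_fst hs),
          Measure.map_apply (hmeas_pair y0) (measurable_fst hs)]
        have hp1 : (fun x : Ω => (x, y i)) ⁻¹' (Prod.fst ⁻¹' s) = s := rfl
        have hp2 : (fun x : Ω => (x, y0)) ⁻¹' (Prod.fst ⁻¹' s) = s := rfl
        rw [hp1, hp2, Measure.smul_apply, Measure.smul_apply, smul_eq_mul,
          smul_eq_mul, ← add_mul, add_tsub_cancel_of_le (hc1 i), one_mul]
      rw [Finset.sum_congr rfl (fun i _ => hterm i), ← Measure.finset_sum_apply,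
        measure_decomp μ A hAm hAd hAu]
    have hπsnd : π.map Prod.snd = νof k := by
      ext s hs
      rw [Measure.map_apply measurable_snd hs, hπ, Measure.finset_sum_apply]
      have key : ∀ (ρ : Measure Ω) (z : Ω),
          ρ ((fun x : Ω => (x, z)) ⁻¹' (Prod.snd ⁻¹' s)) =
            ρ Set.univ * s.indicator 1 z := by
        intro ρ z
        by_cases hz : z ∈ s
        · have : (fun x : Ω => (x, z)) ⁻¹' (Prod.snd ⁻¹' s) = Set.univ := by
            ext x; simp [hz]
          rw [this, Set.indicator_of_mem hz, Pi.one_apply, mul_one]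
        · have : (fun x : Ω => (x, z)) ⁻¹' (Prod.snd ⁻¹' s) = ∅ := by
            ext x; simp [hz]
          rw [this, Set.indicator_of_notMem hz, mul_zero, measure_empty]
      have hterm : ∀ i : Fin K,
          (((c i • μ.restrict (A i)).map (fun x => (x, y i)) +
            ((1 - c i) • μ.restrict (A i)).map (fun x => (x, y0))))
            (Prod.snd ⁻¹' s) =
            q i * s.indicator 1 (y i) + ((1 - c i) * w i) * s.indicator 1 y0 := by
        intro i
        rw [Measure.add_apply,
          Measure.map_apply (hmeas_pair (y i)) (measurable_snd hs),
          Measure.map_apply (hmeas_pair y0) (measurable_snd hs),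
          key _ (y i), key _ y0]
        simp only [Measure.smul_apply, Measure.restrict_apply_univ, smul_eq_mul]
        rw [hcw i]
      rw [Finset.sum_congr rfl (fun i _ => hterm i), Finset.sum_add_distrib,
        ← Finset.sum_mul, hE, hνof]
      simp only [Measure.add_apply, Measure.smul_apply, Measure.finset_sum_apply,
        Measure.dirac_apply' _ hs, smul_eq_mul]
      rfl
    have hπprob : IsProbabilityMeasure π := by
      constructor
      have : π.map Prod.fst Set.univ = π Set.univ := by
        rw [Measure.map_apply measurable_fst MeasurableSet.univ, Set.preimage_univ]
      rw [← this, hπfst, measure_univ]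
    -- the cost
    set f : Ω × Ω → ℝ := fun p => dist p.1 p.2 ^ 2 / 2 with hf
    have hf_cont : Continuous f := ((continuous_fst.dist continuous_snd).pow 2).div_const 2
    have hdistD : ∀ a b : Ω, dist a b ≤ D := fun a b =>
      (dist_le_diam_of_mem isCompact_univ.isBounded (Set.mem_univ a) (Set.mem_univ b)).trans hdiam
    have hf_bd : ∀ p : Ω × Ω, |f p| ≤ D ^ 2 / 2 := by
      intro p
      rw [hf, abs_of_nonneg (by positivity)]
      have := hdistD p.1 p.2
      nlinarith [dist_nonneg (x := p.1) (y := p.2)]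
    -- mass bounds for summand measures
    have hmass1 : ∀ i : Fin K,
        ((c i • μ.restrict (A i)).map (fun x => (x, y i))) Set.univ ≤ 1 := by
      intro i
      rw [Measure.map_apply (hmeas_pair (y i)) MeasurableSet.univ, Set.preimage_univ,
        Measure.smul_apply, Measure.restrict_apply_univ, smul_eq_mul, hcw i]
      exact (hq_w i).trans (hw1 i)
    have hmass2 : ∀ i : Fin K,
        (((1 - c i) • μ.restrict (A i)).map (fun x => (x, y0))) Set.univ ≤ 1 := by
      intro i
      rw [Measure.map_apply (hmeas_pair y0) MeasurableSet.univ, Set.preimage_univ,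
        Measure.smul_apply, Measure.restrict_apply_univ, smul_eq_mul, h1cw i]
      exact (tsub_le_self).trans (hw1 i)
    have hint1 : ∀ i : Fin K, Integrable f
        ((c i • μ.restrict (A i)).map (fun x => (x, y i))) := fun i =>
      integrable_of_bdd (hmass1 i) hf_cont.aestronglyMeasurable _ hf_bd
    have hint2 : ∀ i : Fin K, Integrable f
        (((1 - c i) • μ.restrict (A i)).map (fun x => (x, y0))) := fun i =>
      integrable_of_bdd (hmass2 i) hf_cont.aestronglyMeasurable _ hf_bd
    -- integral of f over π
    have hμfin : ∀ (t : Set Ω), μ.restrict t Set.univ ≤ 1 := by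
      intro t
      rw [Measure.restrict_apply_univ]
      exact prob_le_one
    have hIπ : ∫ p, f p ∂π = ∑ i, (∫ p, f p ∂((c i • μ.restrict (A i)).map (fun x => (x, y i))) +
        ∫ p, f p ∂(((1 - c i) • μ.restrict (A i)).map (fun x => (x, y0)))) := by
      rw [hπ, integral_finset_sum_measure (fun i _ => (hint1 i).add_measure (hint2 i))]
      exact Finset.sum_congr rfl fun i _ => integral_add_measure (hint1 i) (hint2 i)
    -- bound each part
    have hIntf : ∀ z : Ω, Integrable (fun x => dist x z ^ 2 / 2) μ := by
      intro z
      refine integrable_of_bdd (measure_univ.le) ?_ (D ^ 2 / 2) ?_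
      · exact (((continuous_id.dist continuous_const).pow 2).div_const 2).aestronglyMeasurable
      · intro x
        rw [abs_of_nonneg (by positivity)]
        have := hdistD x z
        nlinarith [dist_nonneg (x := x) (y := z)]
    have hIneq : ∫ p, f p ∂π ≤ (∑ i, q i).toReal * (r ^ 2 / 2) +
        (1 - ∑ i, q i).toReal * (D ^ 2 / 2) := by
      rw [hIπ]
      have hbound : ∀ i : Fin K,
          (∫ p, f p ∂((c i • μ.restrict (A i)).map (fun x => (x, y i))) +
           ∫ p, f p ∂(((1 - c i) • μ.restrict (A i)).map (fun x => (x, y0)))) ≤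
          (q i).toReal * (r ^ 2 / 2) + ((1 - c i) * w i).toReal * (D ^ 2 / 2) := by
        intro i
        have e1 : ∫ p, f p ∂((c i • μ.restrict (A i)).map (fun x => (x, y i))) =
            (c i).toReal * ∫ x in A i, dist x (y i) ^ 2 / 2 ∂μ := by
          rw [integral_map (hmeas_pair (y i)).aemeasurable hf_cont.aestronglyMeasurable,
            integral_smul_measure, smul_eq_mul]
        have e2 : ∫ p, f p ∂(((1 - c i) • μ.restrict (A i)).map (fun x => (x, y0))) =
            (1 - c i).toReal * ∫ x in A i, dist x y0 ^ 2 / 2 ∂μ := by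
          rw [integral_map (hmeas_pair y0).aemeasurable hf_cont.aestronglyMeasurable,
            integral_smul_measure, smul_eq_mul]
        have hb1 : ∫ x in A i, dist x (y i) ^ 2 / 2 ∂μ ≤ (w i).toReal * (r ^ 2 / 2) := by
          have h1 : ∫ x in A i, dist x (y i) ^ 2 / 2 ∂μ ≤ ∫ _x in A i, r ^ 2 / 2 ∂μ := by
            refine setIntegral_mono_on ((hIntf (y i)).integrableOn)
              integrableOn_const (hAm i) ?_
            intro x hx
            have hxr : dist x (y i) < r := hAb i hx
            nlinarith [dist_nonneg (x := x) (y := y i)]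
          rw [setIntegral_const, smul_eq_mul] at h1
          exact h1
        have hb2 : ∫ x in A i, dist x y0 ^ 2 / 2 ∂μ ≤ (w i).toReal * (D ^ 2 / 2) := by
          have h1 : ∫ x in A i, dist x y0 ^ 2 / 2 ∂μ ≤ ∫ _x in A i, D ^ 2 / 2 ∂μ := by
            refine setIntegral_mono_on ((hIntf y0).integrableOn)
              integrableOn_const (hAm i) ?_
            intro x hx
            have := hdistD x y0
            nlinarith [dist_nonneg (x := x) (y := y0)]
          rw [setIntegral_const, smul_eq_mul] at h1
          exact h1
        rw [e1, e2]
        have t1 : (c i).toReal * ∫ x in A i, dist x (y i) ^ 2 / 2 ∂μ ≤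
            (q i).toReal * (r ^ 2 / 2) := by
          rw [← hcw i, ENNReal.toReal_mul, mul_assoc]
          exact mul_le_mul_of_nonneg_left hb1 ENNReal.toReal_nonneg
        have t2 : (1 - c i).toReal * ∫ x in A i, dist x y0 ^ 2 / 2 ∂μ ≤
            ((1 - c i) * w i).toReal * (D ^ 2 / 2) := by
          rw [ENNReal.toReal_mul, mul_assoc]
          exact mul_le_mul_of_nonneg_left hb2 ENNReal.toReal_nonneg
        linarith
      calc (∑ i, (∫ p, f p ∂((c i • μ.restrict (A i)).map (fun x => (x, y i))) +
              ∫ p, f p ∂(((1 - c i) • μ.restrict (A i)).map (fun x => (x, y0)))))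
          ≤ ∑ i, ((q i).toReal * (r ^ 2 / 2) + ((1 - c i) * w i).toReal * (D ^ 2 / 2)) :=
            Finset.sum_le_sum fun i _ => hbound i
        _ = (∑ i, (q i).toReal) * (r ^ 2 / 2) +
            (∑ i, ((1 - c i) * w i).toReal) * (D ^ 2 / 2) := by
            rw [Finset.sum_add_distrib, ← Finset.sum_mul, ← Finset.sum_mul]
        _ = (∑ i, q i).toReal * (r ^ 2 / 2) + (1 - ∑ i, q i).toReal * (D ^ 2 / 2) := by
            rw [← ENNReal.toReal_sum (fun i _ => hqfin i),
              ← ENNReal.toReal_sum (fun i _ => ((h1cw i) ▸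
                ((tsub_le_self.trans_lt ((hwfin i).lt_top)).ne : w i - q i ≠ ∞))),
              hE]
    -- numeric bounds on weights
    have hq1 : (∑ i, q i).toReal ≤ 1 := by
      simpa using ENNReal.toReal_mono ENNReal.one_ne_top hqsum_le
    have hq2 : (1 - ∑ i, q i).toReal ≤ (K : ℝ) / m := by
      rw [ENNReal.toReal_sub_of_le hqsum_le ENNReal.one_ne_top, ENNReal.toReal_one]
      have hqr : (∑ i, q i).toReal = ∑ i, (k i : ℝ) / m := by
        rw [ENNReal.toReal_sum (fun i _ => hqfin i)]
        refine Finset.sum_congr rfl fun i _ => ?_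
        rw [hq]
        simp [ENNReal.toReal_div]
      rw [hqr]
      have hsub : (1 : ℝ) - ∑ i, (k i : ℝ) / m = ∑ i, (wr i - (k i : ℝ) / m) := by
        rw [Finset.sum_sub_distrib, hwrsum]
      rw [hsub]
      have hmpos : (0 : ℝ) < m := Nat.cast_pos.2 hm
      calc ∑ i, (wr i - (k i : ℝ) / m) ≤ ∑ _i : Fin K, (1 / m : ℝ) := by
            refine Finset.sum_le_sum fun i _ => ?_
            rw [sub_le_iff_le_add, ← add_div, le_div_iff₀ hmpos]
            linarith [hk_lt i]
        _ = (K : ℝ) * (1 / m) := by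
            rw [Finset.sum_const, Finset.card_univ, Fintype.card_fin, nsmul_eq_mul]
        _ = (K : ℝ) / m := by ring
    refine ⟨νof k, Finset.mem_image_of_mem νof hkT, ?_⟩
    have hmemset : (∫ p, f p ∂π) ∈ {u : ℝ | ∃ π' : Measure (Ω × Ω),
        IsProbabilityMeasure π' ∧ π'.map Prod.fst = μ ∧ π'.map Prod.snd = νof k ∧
        u = ∫ p, dist p.1 p.2 ^ 2 / 2 ∂π'} := ⟨π, hπprob, hπfst, hπsnd, rfl⟩
    have hbdd : BddBelow {u : ℝ | ∃ π' : Measure (Ω × Ω),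
        IsProbabilityMeasure π' ∧ π'.map Prod.fst = μ ∧ π'.map Prod.snd = νof k ∧
        u = ∫ p, dist p.1 p.2 ^ 2 / 2 ∂π'} := by
      refine ⟨0, ?_⟩
      rintro u ⟨π', hπ', h1, h2, rfl⟩
      exact integral_nonneg fun p => by positivity
    have hle : W2sq μ (νof k) ≤ ∫ p, f p ∂π := csInf_le hbdd hmemset
    refine hle.trans (hIneq.trans ?_)
    have h1 : (∑ i, q i).toReal * (r ^ 2 / 2) ≤ r ^ 2 / 2 := by
      nlinarith [sq_nonneg r, ENNReal.toReal_nonneg (a := ∑ i, q i)]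
    have h2 : (1 - ∑ i, q i).toReal * (D ^ 2 / 2) ≤ (K : ℝ) / m * (D ^ 2 / 2) :=
      mul_le_mul_of_nonneg_right hq2 (by positivity)
    linarith

set_option maxHeartbeats 1600000 in
/-- metric entropy of the Wasserstein space over a compact space with
polynomial covering numbers `N(Ω,r) ≤ C r^{-n}` and diameter at most `D`: there is
`C' = C'(C,n,D)` such that for every `ε ∈ (0,1/2)` there is a finite family `S` of Borel
probability measures with `log |S| ≤ C' ε^{-n} log(C'/ε)` which is an `ε`-net for `W2`. -/
theorem stmt13 (C n D : ℝ) (hC : 1 ≤ C) (hn : 1 ≤ n) (hD : 0 < D) :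
    ∃ C' : ℝ, 0 < C' ∧
      ∀ (Ω : Type) [MetricSpace Ω] [CompactSpace Ω] [Nonempty Ω]
        [MeasurableSpace Ω] [BorelSpace Ω],
        Metric.diam (Set.univ : Set Ω) ≤ D →
        (∀ r : ℝ, 0 < r → r < 1 → ∃ F : Finset Ω,
          (F.card : ℝ) ≤ C * r ^ (-n) ∧ ∀ x : Ω, ∃ y ∈ F, dist x y < r) →
        ∀ ε : ℝ, 0 < ε → ε < 1 / 2 →
          ∃ S : Finset (Measure Ω),
            (∀ ν ∈ S, IsProbabilityMeasure ν) ∧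
            Real.log (S.card : ℝ) ≤ C' * ε ^ (-n) * Real.log (C' / ε) ∧
            ∀ μ : Measure Ω, IsProbabilityMeasure μ →
              ∃ ν ∈ S, W2sq μ ν ≤ ε ^ 2 := by
  have hCpos : (0 : ℝ) < C := lt_of_lt_of_le one_pos hC
  have hD2 : (0 : ℝ) ≤ D ^ 2 := sq_nonneg D
  have hA1 : (1 : ℝ) ≤ 3 * C * (D ^ 2 + 1) := by nlinarith
  have hCn2 : (1 : ℝ) ≤ C * (n + 2) := by nlinarith
  refine ⟨C * (n + 2) * (3 * C * (D ^ 2 + 1)), by nlinarith, ?_⟩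
  set A : ℝ := 3 * C * (D ^ 2 + 1) with hA
  set C' : ℝ := C * (n + 2) * A with hC'
  have hC'1 : (1 : ℝ) ≤ C' := by
    have := mul_le_mul hCn2 hA1 (by norm_num : (0:ℝ) ≤ 1) (by linarith : (0:ℝ) ≤ C * (n + 2))
    rw [hC']; linarith
  have hAC' : A ≤ C' := by
    rw [hC']
    exact le_mul_of_one_le_left (by linarith) hCn2
  have hCn2C' : C * (n + 2) ≤ C' := by
    rw [hC']
    exact le_mul_of_one_le_right (by linarith) hA1
  have hCC' : C ≤ C' := by
    have h1 : C ≤ C * (n + 2) := le_mul_of_one_le_right hCpos.le (by linarith)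
    linarith
  intro Ω _ _ _ _ _ hdiam hcov ε hε hε2
  obtain ⟨F, hFcard, hFnet⟩ := hcov ε hε (by linarith)
  have hεn1 : (1 : ℝ) ≤ ε ^ (-n) :=
    Real.one_le_rpow_of_pos_of_le_one_of_nonpos hε (by linarith) (by linarith)
  have hεnpos : (0 : ℝ) < ε ^ (-n) := by linarith
  have hε2pos : (0 : ℝ) < ε ^ 2 := by positivity
  have hε21 : ε ^ 2 ≤ 1 := by nlinarith
  set x0 : ℝ := C * ε ^ (-n) * (D ^ 2 + 1) / ε ^ 2 with hx0
  have hx0_1 : (1 : ℝ) ≤ x0 := by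
    rw [hx0, le_div_iff₀ hε2pos, one_mul]
    nlinarith
  have hx0pos : (0 : ℝ) < x0 := by linarith
  obtain ⟨m, hm_pos, hmge, hmlt⟩ : ∃ m : ℕ, 0 < m ∧ x0 ≤ (m : ℝ) ∧ (m : ℝ) < x0 + 1 :=
    ⟨⌈x0⌉₊, Nat.ceil_pos.2 hx0pos, Nat.le_ceil x0, Nat.ceil_lt_add_one hx0pos.le⟩
  have hmR : (0 : ℝ) < m := Nat.cast_pos.2 hm_pos
  obtain ⟨S, hSprob, hScard, hSnet⟩ := net_core D hD hdiam ε hε F hFnet m hm_pos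
  have hLpos : (0 : ℝ) < -Real.log ε := by
    have : Real.log ε < 0 := Real.log_neg hε (by linarith)
    linarith
  refine ⟨S, hSprob, ?_, ?_⟩
  · -- entropy bound
    have hm1 : (m : ℝ) + 1 ≤ A * ε ^ (-n) / ε ^ 2 := by
      have h2 : x0 + 2 ≤ 3 * x0 := by linarith
      have h3 : 3 * x0 = A * ε ^ (-n) / ε ^ 2 := by
        rw [hx0, hA]; ring
      linarith
    have hlogm1 : Real.log ((m : ℝ) + 1) ≤
        Real.log A + (n + 2) * (-Real.log ε) := by
      have h1 : Real.log ((m : ℝ) + 1) ≤ Real.log (A * ε ^ (-n) / ε ^ 2) :=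
        Real.log_le_log (by linarith) hm1
      rw [Real.log_div (by positivity) (by positivity),
        Real.log_mul (by positivity) (by positivity),
        Real.log_rpow hε, Real.log_pow] at h1
      push_cast at h1
      linarith
    have hlogm1_nonneg : 0 ≤ Real.log ((m : ℝ) + 1) :=
      Real.log_nonneg (by linarith)
    have hcard_log : Real.log (S.card : ℝ) ≤ (F.card : ℝ) * Real.log ((m : ℝ) + 1) := by
      rcases Nat.eq_zero_or_pos S.card with h0 | hpos
      · rw [h0]
        simp only [Nat.cast_zero, Real.log_zero]
        positivity
      · have h1 : Real.log (S.card : ℝ) ≤ Real.log (((m + 1) ^ F.card : ℕ) : ℝ) :=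
          Real.log_le_log (Nat.cast_pos.2 hpos) (Nat.cast_le.2 hScard)
        rw [Nat.cast_pow, Nat.cast_add, Nat.cast_one, Real.log_pow] at h1
        exact h1
    have hkey : C * (Real.log A + (n + 2) * (-Real.log ε)) ≤
        C' * (Real.log C' + (-Real.log ε)) := by
      have hlogA_nonneg : 0 ≤ Real.log A := Real.log_nonneg hA1
      have hlogA_le : Real.log A ≤ Real.log C' := Real.log_le_log (by linarith) hAC'
      have h1 : C * Real.log A ≤ C' * Real.log C' :=
        mul_le_mul hCC' hlogA_le hlogA_nonneg (by linarith)
      have h2 : C * ((n + 2) * (-Real.log ε)) ≤ C' * (-Real.log ε) := by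
        have : C * (n + 2) * (-Real.log ε) ≤ C' * (-Real.log ε) :=
          mul_le_mul_of_nonneg_right hCn2C' hLpos.le
        linarith [this]
      nlinarith [h1, h2]
    have hlogC'div : Real.log (C' / ε) = Real.log C' + (-Real.log ε) := by
      rw [Real.log_div (by linarith) hε.ne']
      ring
    calc Real.log (S.card : ℝ) ≤ (F.card : ℝ) * Real.log ((m : ℝ) + 1) := hcard_log
      _ ≤ (C * ε ^ (-n)) * (Real.log A + (n + 2) * (-Real.log ε)) := by
          refine mul_le_mul hFcard hlogm1 hlogm1_nonneg ?_
          positivity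
      _ = ε ^ (-n) * (C * (Real.log A + (n + 2) * (-Real.log ε))) := by ring
      _ ≤ ε ^ (-n) * (C' * (Real.log C' + (-Real.log ε))) :=
          mul_le_mul_of_nonneg_left hkey hεnpos.le
      _ = C' * ε ^ (-n) * Real.log (C' / ε) := by
          rw [hlogC'div]; ring
  · -- net property
    intro μ hμ
    obtain ⟨ν, hνS, hb⟩ := hSnet μ hμ
    refine ⟨ν, hνS, hb.trans ?_⟩
    have hdiv : (F.card : ℝ) / m ≤ ε ^ 2 / (D ^ 2 + 1) := by
      rw [div_le_div_iff₀ hmR (by positivity)]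
      have h1 : x0 * ε ^ 2 = C * ε ^ (-n) * (D ^ 2 + 1) := by
        rw [hx0, div_mul_cancel₀ _ (ne_of_gt hε2pos)]
      have h2 : (F.card : ℝ) * (D ^ 2 + 1) ≤ C * ε ^ (-n) * (D ^ 2 + 1) :=
        mul_le_mul_of_nonneg_right hFcard (by positivity)
      have h3 : x0 * ε ^ 2 ≤ (m : ℝ) * ε ^ 2 :=
        mul_le_mul_of_nonneg_right hmge hε2pos.le
      calc (F.card : ℝ) * (D ^ 2 + 1) ≤ x0 * ε ^ 2 := by rw [h1]; exact h2
        _ ≤ (m : ℝ) * ε ^ 2 := h3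
        _ = ε ^ 2 * m := by ring
    have h3 : (F.card : ℝ) / m * (D ^ 2 / 2) ≤ ε ^ 2 / 2 := by
      have h4 : (F.card : ℝ) / m * (D ^ 2 / 2) ≤ ε ^ 2 / (D ^ 2 + 1) * (D ^ 2 / 2) :=
        mul_le_mul_of_nonneg_right hdiv (by positivity)
      have h5 : ε ^ 2 / (D ^ 2 + 1) * (D ^ 2 / 2) ≤ ε ^ 2 / 2 := by
        rw [div_mul_eq_mul_div, div_le_div_iff₀ (by positivity) (by norm_num)]
        nlinarith [hε2pos]
      linarith
    linarith
end

section
/- Let (Y, d) be a compact metric space with diameter at most Δ, let K ⊆ Y, and assume N(K, r) ≤ C·r^{−p} for all r ∈ (0,1], where C ≥ 1 and p ≥ 0. Let X_1, X_2, … be i.i.d. Y-valued random variables whose common law P is supported in K, and let P_N := N^{−1} Σ_{i=1}^N δ_{X_i} denote the empirical measure. Then there is a constant C_E > 0, depending only on Δ, C and p, such that E[W1(P_N, P)] ≤ C_E · N^{−1/(p+2)} for every integer N ≥ 1. -/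
open MeasureTheory ProbabilityTheory
open scoped ENNReal

lemma combo (a b x : ENNReal) (ha : a ≠ ∞) (hb : b ≠ ∞) (hx : x ≤ a) :
    (min a b)/(a*b) * (x*b) + ((a - min a b)/a) * x = x := by
  rcases eq_or_ne a 0 with rfl | ha0
  · have : x = 0 := le_antisymm (by simpa using hx) zero_le
    simp [this]
  rcases eq_or_ne b 0 with rfl | hb0
  · simp [ENNReal.div_self ha0 ha]
  · have h1 : (min a b)/(a*b) * (x*b) = x * ((min a b)/a) := by
      rw [ENNReal.div_eq_inv_mul, ENNReal.mul_inv (Or.inl ha0) (Or.inl ha),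
        ENNReal.div_eq_inv_mul]
      calc a⁻¹ * b⁻¹ * min a b * (x * b) = (b⁻¹ * b) * (a⁻¹ * min a b * x) := by ring
        _ = x * (a⁻¹ * min a b) := by rw [ENNReal.inv_mul_cancel hb0 hb]; ring
    rw [h1, mul_comm ((a - min a b)/a) x, ← mul_add, ENNReal.div_add_div_same,
      add_tsub_cancel_of_le (min_le_left a b), ENNReal.div_self ha0 ha, mul_one]


lemma combo' (a b y : ENNReal) (ha : a ≠ ⊤) (hb : b ≠ ⊤) (hy : y ≤ b) :
    (min a b)/(a*b) * (a*y) + ((b - min a b)/b) * y = y := by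
  have h := combo b a y hb ha hy
  rwa [min_comm b a, mul_comm b a, mul_comm y a] at h

/-- The `1`-Wasserstein distance: infimum over couplings of the integral of the distance. -/
noncomputable def W1 {Y : Type*} [MetricSpace Y] [MeasurableSpace Y]
    (μ ν : Measure Y) : ℝ :=
  sInf {r : ℝ | ∃ γ : Measure (Y × Y), IsProbabilityMeasure γ ∧
    γ.map Prod.fst = μ ∧ γ.map Prod.snd = ν ∧ r = ∫ p, dist p.1 p.2 ∂γ}

section lemA
variable {Y : Type} [MetricSpace Y] [CompactSpace Y] [MeasurableSpace Y] [BorelSpace Y]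

lemma lemA (μ ν : Measure Y) (hμ : IsProbabilityMeasure μ) (hν : IsProbabilityMeasure ν)
    (Δ : ℝ) (hΔ : 0 ≤ Δ) (hdiam : Metric.diam (Set.univ : Set Y) ≤ Δ)
    (r : ℝ) (hr : 0 ≤ r) (m : ℕ) (A : ℕ → Set Y) (hmeas : ∀ j, MeasurableSet (A j))
    (hdisj : Set.PairwiseDisjoint ↑(Finset.range m) A)
    (hcover : ⋃ j ∈ Finset.range m, A j = Set.univ)
    (hsmall : ∀ j, j < m → (∀ x ∈ A j, ∀ y ∈ A j, dist x y ≤ 2*r) ∨ (μ (A j) = 0 ∧ ν (A j) = 0)) :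
    W1 μ ν ≤ 2*r + Δ * ∑ j ∈ Finset.range m, |(μ (A j)).toReal - (ν (A j)).toReal| := by
  classical
  set a : ℕ → ENNReal := fun j => μ (A j) with ha_def
  set b : ℕ → ENNReal := fun j => ν (A j) with hb_def
  set c : ℕ → ENNReal := fun j => min (a j) (b j) with hc_def
  have ha_fin : ∀ j, a j ≠ ⊤ := fun j => measure_ne_top μ _
  have hb_fin : ∀ j, b j ≠ ⊤ := fun j => measure_ne_top ν _
  have hc_le_a : ∀ j, c j ≤ a j := fun j => min_le_left _ _
  have hc_le_b : ∀ j, c j ≤ b j := fun j => min_le_right _ _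
  set μr : ℕ → Measure Y := fun j => μ.restrict (A j) with hμr_def
  set νr : ℕ → Measure Y := fun j => ν.restrict (A j) with hνr_def
  set γj : ℕ → Measure (Y × Y) :=
    fun j => (c j / (a j * b j)) • ((μr j).prod (νr j)) with hγj_def
  set μ' : Measure Y := ∑ j ∈ Finset.range m, ((a j - c j)/(a j)) • μr j with hμ'_def
  set ν' : Measure Y := ∑ j ∈ Finset.range m, ((b j - c j)/(b j)) • νr j with hν'_def
  set ε : ENNReal := ∑ j ∈ Finset.range m, (a j - c j) with hε_def
  -- sums of masses
  have hsum_meas : ∀ (ξ : Measure Y) (s : Set Y), MeasurableSet s →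
      ξ s = ∑ j ∈ Finset.range m, ξ (s ∩ A j) := by
    intro ξ s hs
    have : s = ⋃ j ∈ Finset.range m, (s ∩ A j) := by
      rw [← Set.inter_iUnion₂, hcover, Set.inter_univ]
    conv_lhs => rw [this]
    exact measure_biUnion_finset (hdisj.mono_on fun j _ => Set.inter_subset_right)
      (fun j _ => hs.inter (hmeas j))
  haveI := hμ; haveI := hν
  have hsa : ∑ j ∈ Finset.range m, a j = 1 := by
    have := hsum_meas μ Set.univ MeasurableSet.univ
    simpa [Set.univ_inter] using this.symm
  have hsb : ∑ j ∈ Finset.range m, b j = 1 := by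
    have := hsum_meas ν Set.univ MeasurableSet.univ
    simpa [Set.univ_inter] using this.symm
  have hsumc_fin : ∑ j ∈ Finset.range m, c j ≠ ⊤ := by
    refine ne_top_of_le_ne_top ?_ (Finset.sum_le_sum fun j _ => hc_le_a j)
    rw [hsa]; exact ENNReal.one_ne_top
  have hεc : ε + ∑ j ∈ Finset.range m, c j = 1 := by
    rw [hε_def, ← Finset.sum_add_distrib,
      Finset.sum_congr rfl fun j _ => tsub_add_cancel_of_le (hc_le_a j)]
    exact hsa
  have hε_le_one : ε ≤ 1 := hεc ▸ le_self_add
  have hε_fin : ε ≠ ⊤ := ne_top_of_le_ne_top ENNReal.one_ne_top hε_le_one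
  have hεb : ∑ j ∈ Finset.range m, (b j - c j) = ε := by
    have h2 : (∑ j ∈ Finset.range m, (b j - c j)) + ∑ j ∈ Finset.range m, c j = 1 := by
      rw [← Finset.sum_add_distrib,
        Finset.sum_congr rfl fun j _ => tsub_add_cancel_of_le (hc_le_b j)]
      exact hsb
    exact WithTop.add_right_cancel hsumc_fin (h2.trans hεc.symm)
  have hμ'_apply : ∀ s : Set Y, MeasurableSet s →
      μ' s = ∑ j ∈ Finset.range m, ((a j - c j)/(a j)) * μ (s ∩ A j) := by
    intro s hs
    rw [hμ'_def, Measure.finset_sum_apply]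
    exact Finset.sum_congr rfl fun j _ => by
      rw [Measure.smul_apply, smul_eq_mul, Measure.restrict_apply hs]
  have hν'_apply : ∀ s : Set Y, MeasurableSet s →
      ν' s = ∑ j ∈ Finset.range m, ((b j - c j)/(b j)) * ν (s ∩ A j) := by
    intro s hs
    rw [hν'_def, Measure.finset_sum_apply]
    exact Finset.sum_congr rfl fun j _ => by
      rw [Measure.smul_apply, smul_eq_mul, Measure.restrict_apply hs]
  have hdiv_self_mul : ∀ (x y : ENNReal), y ≠ ⊤ → (x / y) * y = if y = 0 then 0 else x := by
    intro x y hy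
    rcases eq_or_ne y 0 with rfl | h0
    · simp
    · rw [ENNReal.div_mul_cancel h0 hy, if_neg h0]
  have hμ'_univ : μ' Set.univ = ε := by
    rw [hμ'_apply _ MeasurableSet.univ, hε_def]
    refine Finset.sum_congr rfl fun j _ => ?_
    rw [Set.univ_inter]
    rcases eq_or_ne (a j) 0 with h0 | h0
    · have hc0 : c j = 0 := le_antisymm (h0 ▸ hc_le_a j) zero_le
      simp [h0, hc0]
    · exact ENNReal.div_mul_cancel h0 (ha_fin j)
  have hν'_univ : ν' Set.univ = ε := by
    rw [hν'_apply _ MeasurableSet.univ, ← hεb]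
    refine Finset.sum_congr rfl fun j _ => ?_
    rw [Set.univ_inter]
    rcases eq_or_ne (b j) 0 with h0 | h0
    · have hc0 : c j = 0 := le_antisymm (h0 ▸ hc_le_b j) zero_le
      simp [h0, hc0]
    · exact ENNReal.div_mul_cancel h0 (hb_fin j)
  haveI : IsFiniteMeasure μ' :=
    ⟨by rw [hμ'_univ]; exact lt_of_le_of_lt hε_le_one ENNReal.one_lt_top⟩
  haveI : IsFiniteMeasure ν' :=
    ⟨by rw [hν'_univ]; exact lt_of_le_of_lt hε_le_one ENNReal.one_lt_top⟩
  set ρ : Measure (Y × Y) := ε⁻¹ • (μ'.prod ν') with hρ_def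
  set γ : Measure (Y × Y) := (∑ j ∈ Finset.range m, γj j) + ρ with hγ_def
  have hγ_apply_fst : ∀ s : Set Y, MeasurableSet s → γ (Prod.fst ⁻¹' s) = μ s := by
    intro s hs
    have hpre : (Prod.fst ⁻¹' s : Set (Y × Y)) = s ×ˢ Set.univ := by
      ext p; simp [Set.mem_prod]
    rw [hγ_def, Measure.add_apply, Measure.finset_sum_apply, hρ_def, Measure.smul_apply,
      smul_eq_mul, hpre]
    have hj : ∀ j ∈ Finset.range m,
        γj j (s ×ˢ Set.univ) = (c j/(a j * b j)) * (μ (s ∩ A j) * b j) := by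
      intro j _
      rw [hγj_def]
      simp only [Measure.smul_apply, smul_eq_mul]
      rw [Measure.prod_prod, Measure.restrict_apply hs, Measure.restrict_apply_univ]
    rw [Finset.sum_congr rfl hj, Measure.prod_prod, hν'_univ]
    have hrest : ε⁻¹ * (μ' s * ε) = μ' s := by
      rcases eq_or_ne ε 0 with h0 | h0
      · have h1 : μ' s = 0 := le_antisymm
          (le_trans (measure_mono (Set.subset_univ s)) (by rw [hμ'_univ, h0])) zero_le
        simp [h1]
      · rw [mul_comm (μ' s) ε, ← mul_assoc, ENNReal.inv_mul_cancel h0 hε_fin, one_mul]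
    rw [hrest, hμ'_apply s hs, ← Finset.sum_add_distrib, hsum_meas μ s hs]
    exact Finset.sum_congr rfl fun j _ => combo (a j) (b j) (μ (s ∩ A j)) (ha_fin j)
      (hb_fin j) (measure_mono Set.inter_subset_right)
  have hγ_apply_snd : ∀ s : Set Y, MeasurableSet s → γ (Prod.snd ⁻¹' s) = ν s := by
    intro s hs
    have hpre : (Prod.snd ⁻¹' s : Set (Y × Y)) = Set.univ ×ˢ s := by
      ext p; simp [Set.mem_prod]
    rw [hγ_def, Measure.add_apply, Measure.finset_sum_apply, hρ_def, Measure.smul_apply,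
      smul_eq_mul, hpre]
    have hj : ∀ j ∈ Finset.range m,
        γj j (Set.univ ×ˢ s) = (c j/(a j * b j)) * (a j * ν (s ∩ A j)) := by
      intro j _
      rw [hγj_def]
      simp only [Measure.smul_apply, smul_eq_mul]
      rw [Measure.prod_prod, Measure.restrict_apply hs, Measure.restrict_apply_univ]
    rw [Finset.sum_congr rfl hj, Measure.prod_prod, hμ'_univ]
    have hrest : ε⁻¹ * (ε * ν' s) = ν' s := by
      rcases eq_or_ne ε 0 with h0 | h0
      · have h1 : ν' s = 0 := le_antisymm
          (le_trans (measure_mono (Set.subset_univ s)) (by rw [hν'_univ, h0])) zero_le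
        simp [h1]
      · rw [← mul_assoc, ENNReal.inv_mul_cancel h0 hε_fin, one_mul]
    rw [hrest, hν'_apply s hs, ← Finset.sum_add_distrib, hsum_meas ν s hs]
    exact Finset.sum_congr rfl fun j _ => combo' (a j) (b j) (ν (s ∩ A j)) (ha_fin j)
      (hb_fin j) (measure_mono Set.inter_subset_right)
  have hmap_fst : γ.map Prod.fst = μ := by
    ext s hs
    rw [Measure.map_apply measurable_fst hs, hγ_apply_fst s hs]
  have hmap_snd : γ.map Prod.snd = ν := by
    ext s hs
    rw [Measure.map_apply measurable_snd hs, hγ_apply_snd s hs]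
  have hγ_prob : IsProbabilityMeasure γ := by
    constructor
    have := hγ_apply_fst Set.univ MeasurableSet.univ
    simpa using this
  -- masses of the pieces
  have hmassγj : ∀ j, γj j Set.univ ≤ c j := by
    intro j
    rw [hγj_def]
    simp only [Measure.smul_apply, smul_eq_mul]
    rw [← Set.univ_prod_univ, Measure.prod_prod, Measure.restrict_apply_univ,
      Measure.restrict_apply_univ]
    rcases eq_or_ne (a j * b j) 0 with h0 | h0
    · rw [show μ (A j) * ν (A j) = a j * b j from rfl, h0, mul_zero]
      exact zero_le
    · rw [show μ (A j) * ν (A j) = a j * b j from rfl,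
        ENNReal.div_mul_cancel h0 (ENNReal.mul_ne_top (ha_fin j) (hb_fin j))]
  have hmassρ : ρ Set.univ ≤ ε := by
    rw [hρ_def, Measure.smul_apply, smul_eq_mul, ← Set.univ_prod_univ, Measure.prod_prod,
      hμ'_univ, hν'_univ]
    rcases eq_or_ne ε 0 with h0 | h0
    · simp [h0]
    · rw [← mul_assoc, ENNReal.inv_mul_cancel h0 hε_fin, one_mul]
  haveI hfinγj : ∀ j, IsFiniteMeasure (γj j) := fun j =>
    ⟨lt_of_le_of_lt (hmassγj j) (lt_of_le_of_lt (hc_le_a j) (ha_fin j).lt_top)⟩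
  haveI hfinρ : IsFiniteMeasure ρ := ⟨lt_of_le_of_lt hmassρ hε_fin.lt_top⟩
  -- integrability of dist
  have hdistΔ : ∀ p : Y × Y, dist p.1 p.2 ≤ Δ := fun p =>
    le_trans (Metric.dist_le_diam_of_mem isCompact_univ.isBounded trivial trivial) hdiam
  have hcont : Continuous (fun p : Y × Y => dist p.1 p.2) := continuous_dist
  have hint : ∀ (ξ : Measure (Y × Y)), IsFiniteMeasure ξ →
      Integrable (fun p : Y × Y => dist p.1 p.2) ξ := by
    intro ξ hξ
    exact (MemLp.of_bound hcont.aestronglyMeasurable Δ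
      (Filter.Eventually.of_forall fun p => by
        rw [Real.norm_of_nonneg dist_nonneg]; exact hdistΔ p)).integrable le_rfl
  haveI hfinsum : IsFiniteMeasure (∑ j ∈ Finset.range m, γj j) := by
    constructor
    rw [Measure.finset_sum_apply]
    refine lt_of_le_of_lt (Finset.sum_le_sum fun j _ => hmassγj j) ?_
    exact lt_of_le_of_lt (le_trans (Finset.sum_le_sum fun j _ => hc_le_b j) hsb.le)
      ENNReal.one_lt_top
  -- cost of each γj
  have hcostγj : ∀ j, j < m → ∫ p, dist p.1 p.2 ∂(γj j) ≤ 2*r * (c j).toReal := by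
    intro j hj
    rcases hsmall j hj with hsm | ⟨hμ0, hν0⟩
    · have hnull : γj j ((A j ×ˢ A j)ᶜ) = 0 := by
        rw [hγj_def]
        simp only [Measure.smul_apply, smul_eq_mul]
        rw [Measure.prod_restrict, Measure.restrict_apply (((hmeas j).prod (hmeas j)).compl),
          Set.compl_inter_self, measure_empty, mul_zero]
      have hae : ∀ᵐ p ∂(γj j), dist p.1 p.2 ≤ 2*r := by
        rw [Filter.eventually_iff, mem_ae_iff]
        refine measure_mono_null (fun p hp => ?_) hnull
        simp only [Set.mem_compl_iff, Set.mem_setOf_eq, not_le] at hp ⊢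
        intro hmem
        exact absurd (hsm p.1 hmem.1 p.2 hmem.2) (not_le.mpr hp)
      calc ∫ p, dist p.1 p.2 ∂(γj j) ≤ ∫ _, 2*r ∂(γj j) :=
            integral_mono_ae (hint _ (hfinγj j)) (integrable_const _) hae
        _ = (γj j Set.univ).toReal * (2*r) := by rw [integral_const, smul_eq_mul]; rfl
        _ ≤ (c j).toReal * (2*r) := by
            refine mul_le_mul_of_nonneg_right ?_ (by linarith)
            exact ENNReal.toReal_mono (ne_top_of_le_ne_top (hb_fin j) (hc_le_b j)) (hmassγj j)
        _ = 2*r * (c j).toReal := mul_comm _ _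
    · have hc0 : c j = 0 := by
        rw [hc_def]; simp only
        rw [show a j = 0 from hμ0, min_eq_left zero_le]
      have hγj0 : γj j = 0 := by
        rw [hγj_def]; simp only [hc0, ENNReal.zero_div, zero_smul]
      rw [hγj0, hc0]
      simp
  have hcostρ : ∫ p, dist p.1 p.2 ∂ρ ≤ Δ * ε.toReal := by
    calc ∫ p, dist p.1 p.2 ∂ρ ≤ ∫ _, Δ ∂ρ :=
          integral_mono_ae (hint _ hfinρ) (integrable_const _)
            (Filter.Eventually.of_forall fun p => hdistΔ p)
      _ = (ρ Set.univ).toReal * Δ := by rw [integral_const, smul_eq_mul]; rfl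
      _ ≤ ε.toReal * Δ := mul_le_mul_of_nonneg_right
          (ENNReal.toReal_mono hε_fin hmassρ) hΔ
      _ = Δ * ε.toReal := mul_comm _ _
  -- total cost
  have hcost : ∫ p, dist p.1 p.2 ∂γ ≤
      2*r + Δ * ∑ j ∈ Finset.range m, |(μ (A j)).toReal - (ν (A j)).toReal| := by
    have hsplit : ∫ p, dist p.1 p.2 ∂γ =
        (∑ j ∈ Finset.range m, ∫ p, dist p.1 p.2 ∂(γj j)) + ∫ p, dist p.1 p.2 ∂ρ := by
      rw [hγ_def, integral_add_measure (hint _ hfinsum) (hint _ hfinρ),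
        integral_finset_sum_measure (fun j _ => hint _ (hfinγj j))]
    rw [hsplit]
    have h1 : (∑ j ∈ Finset.range m, ∫ p, dist p.1 p.2 ∂(γj j)) ≤ 2*r := by
      calc (∑ j ∈ Finset.range m, ∫ p, dist p.1 p.2 ∂(γj j))
          ≤ ∑ j ∈ Finset.range m, 2*r * (c j).toReal :=
            Finset.sum_le_sum fun j hj => hcostγj j (Finset.mem_range.mp hj)
        _ = 2*r * ∑ j ∈ Finset.range m, (c j).toReal := by rw [Finset.mul_sum]
        _ ≤ 2*r * 1 := by
            refine mul_le_mul_of_nonneg_left ?_ (by linarith)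
            rw [← ENNReal.toReal_sum (fun j _ => ne_top_of_le_ne_top (hb_fin j) (hc_le_b j))]
            calc (∑ j ∈ Finset.range m, c j).toReal
                ≤ (∑ j ∈ Finset.range m, b j).toReal :=
                  ENNReal.toReal_mono (by rw [hsb]; exact ENNReal.one_ne_top)
                    (Finset.sum_le_sum fun j _ => hc_le_b j)
              _ = 1 := by rw [hsb, ENNReal.toReal_one]
        _ = 2*r := mul_one _
    have h2 : ε.toReal ≤ ∑ j ∈ Finset.range m, |(μ (A j)).toReal - (ν (A j)).toReal| := by
      rw [hε_def, ENNReal.toReal_sum (fun j _ =>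
        ne_top_of_le_ne_top (ha_fin j) (tsub_le_self.trans le_rfl))]
      refine Finset.sum_le_sum fun j _ => ?_
      rcases le_total (a j) (b j) with hab | hab
      · have : c j = a j := min_eq_left hab
        rw [this, tsub_self]
        simp [abs_nonneg]
      · have hcj : c j = b j := min_eq_right hab
        rw [hcj, ENNReal.toReal_sub_of_le hab (ha_fin j)]
        exact le_abs_self _
    calc (∑ j ∈ Finset.range m, ∫ p, dist p.1 p.2 ∂(γj j)) + ∫ p, dist p.1 p.2 ∂ρ
        ≤ 2*r + Δ * ε.toReal := add_le_add h1 hcostρ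
      _ ≤ 2*r + Δ * ∑ j ∈ Finset.range m, |(μ (A j)).toReal - (ν (A j)).toReal| := by
          exact add_le_add_right (mul_le_mul_of_nonneg_left h2 hΔ) _
  -- conclude
  have hbdd : BddBelow {x : ℝ | ∃ γ' : Measure (Y × Y), IsProbabilityMeasure γ' ∧
      γ'.map Prod.fst = μ ∧ γ'.map Prod.snd = ν ∧ x = ∫ p, dist p.1 p.2 ∂γ'} := by
    refine ⟨0, fun x hx => ?_⟩
    obtain ⟨γ', _, _, _, rfl⟩ := hx
    exact integral_nonneg fun p => dist_nonneg
  have hmem : (∫ p, dist p.1 p.2 ∂γ) ∈ {x : ℝ | ∃ γ' : Measure (Y × Y),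
      IsProbabilityMeasure γ' ∧ γ'.map Prod.fst = μ ∧ γ'.map Prod.snd = ν ∧
      x = ∫ p, dist p.1 p.2 ∂γ'} := ⟨γ, hγ_prob, hmap_fst, hmap_snd, rfl⟩
  exact le_trans (csInf_le hbdd hmem) hcost
end lemA


lemma my_cs {Ω : Type*} [MeasurableSpace Ω] {μ : Measure Ω} [IsProbabilityMeasure μ]
    {W : Ω → ℝ} (hW : MemLp W 2 μ) :
    ∫ ω, |W ω| ∂μ ≤ Real.sqrt (∫ ω, (W ω)^2 ∂μ) := by
  have h22 : (2:ℝ).HolderConjugate 2 := ⟨by norm_num, by norm_num, by norm_num⟩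
  have habs : MemLp (fun ω => |W ω|) (ENNReal.ofReal 2) μ := by
    rw [ENNReal.ofReal_ofNat]; exact hW.abs
  have hone : MemLp (fun _ : Ω => (1:ℝ)) (ENNReal.ofReal 2) μ := memLp_const 1
  have h := integral_mul_le_Lp_mul_Lq_of_nonneg h22
    (Filter.Eventually.of_forall (fun ω => abs_nonneg (W ω)))
    (Filter.Eventually.of_forall (fun _ => zero_le_one)) habs hone
  simp only [mul_one, Real.one_rpow] at h
  have : ∫ ω, |W ω| ^ (2:ℝ) ∂μ = ∫ ω, (W ω)^2 ∂μ := by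
    apply integral_congr_ae; filter_upwards with ω
    rw [show ((2:ℝ) = ((2:ℕ):ℝ)) by norm_num, Real.rpow_natCast, sq_abs]
  rw [this] at h
  calc ∫ ω, |W ω| ∂μ ≤ (∫ ω, (W ω)^2 ∂μ) ^ ((1:ℝ)/2) * (∫ ω, (1:ℝ) ∂μ) ^ ((1:ℝ)/2) := h
    _ = Real.sqrt (∫ ω, (W ω)^2 ∂μ) := by
        simp [integral_const, Real.sqrt_eq_rpow]

lemma emp_dev {Θ Y : Type} [MeasurableSpace Θ] [MeasurableSpace Y]
    (Pr : Measure Θ) [IsProbabilityMeasure Pr]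
    (X : ℕ → Θ → Y) (hXm : ∀ i, Measurable (X i))
    (P : Measure Y) [IsProbabilityMeasure P]
    (hlaw : ∀ i, Pr.map (X i) = P)
    (hindep : iIndepFun X Pr)
    (A : Set Y) (hA : MeasurableSet A) (N : ℕ) (hN : 1 ≤ N) :
    ∫ ω, |(N:ℝ)⁻¹ * ∑ i ∈ Finset.range N, A.indicator (fun _ => (1:ℝ)) (X i ω)
        - (P A).toReal| ∂Pr
      ≤ Real.sqrt ((P A).toReal) / Real.sqrt N := by
  classical
  set g : Y → ℝ := A.indicator (fun _ => (1:ℝ)) with hg_def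
  have hgmeas : Measurable g := measurable_const.indicator hA
  set B : ℕ → Θ → ℝ := fun i ω => g (X i ω) with hB_def
  have hBmeas : ∀ i, Measurable (B i) := fun i => hgmeas.comp (hXm i)
  have hBbd : ∀ i ω, ‖B i ω‖ ≤ 1 := by
    intro i ω
    rw [hB_def, hg_def, Real.norm_eq_abs]
    by_cases h : X i ω ∈ A <;> simp [Set.indicator_apply, h]
  have hBL2 : ∀ i, MemLp (B i) 2 Pr := fun i =>
    MemLp.of_bound (hBmeas i).aestronglyMeasurable 1
      (Filter.Eventually.of_forall (hBbd i))
  set p : ℝ := (P A).toReal with hp_def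
  have hp_nonneg : 0 ≤ p := ENNReal.toReal_nonneg
  have hEB : ∀ i, ∫ ω, B i ω ∂Pr = p := by
    intro i
    rw [hB_def]
    have : ∫ ω, g (X i ω) ∂Pr = ∫ y, g y ∂(Pr.map (X i)) :=
      (integral_map (hXm i).aemeasurable hgmeas.aestronglyMeasurable).symm
    rw [this, hlaw i, hg_def]
    exact integral_indicator_one hA
  have hEB2 : ∀ i, ∫ ω, (B i ω)^2 ∂Pr = p := by
    intro i
    have hsq : ∀ ω, (B i ω)^2 = B i ω := by
      intro ω
      rw [hB_def, hg_def]
      by_cases h : X i ω ∈ A <;> simp [Set.indicator_apply, h]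
    rw [integral_congr_ae (Filter.Eventually.of_forall hsq)]
    exact hEB i
  have hvarB : ∀ i, variance (B i) Pr = p - p^2 := by
    intro i
    rw [variance_eq_sub (hBL2 i)]
    simp only [Pi.pow_apply]
    rw [hEB2 i, hEB i]
  -- independence of the B's
  have hBindep : iIndepFun B Pr := by
    have := hindep.comp (fun _ => g) (fun _ => hgmeas)
    exact this
  set S : Θ → ℝ := fun ω => ∑ i ∈ Finset.range N, B i ω with hS_def
  have hSL2 : MemLp S 2 Pr := by
    have : S = ∑ i ∈ Finset.range N, B i := by
      funext ω; rw [hS_def]; simp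
    rw [this]
    exact memLp_finset_sum' _ (fun i _ => hBL2 i)
  have hvarS : variance S Pr = N * (p - p^2) := by
    have : S = ∑ i ∈ Finset.range N, B i := by
      funext ω; rw [hS_def]; simp
    rw [this, IndepFun.variance_sum (fun i _ => hBL2 i)
      (fun i _ j _ hij => hBindep.indepFun hij)]
    simp [hvarB, Finset.sum_const]; ring
  set Z : Θ → ℝ := fun ω => (N:ℝ)⁻¹ * S ω with hZ_def
  have hZL2 : MemLp Z 2 Pr := by
    have : Z = (N:ℝ)⁻¹ • S := by funext ω; simp [hZ_def]
    rw [this]; exact hSL2.const_smul _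
  have hvarZ : variance Z Pr = ((N:ℝ)⁻¹)^2 * (N * (p - p^2)) := by
    have : Z = (N:ℝ)⁻¹ • S := by funext ω; simp [hZ_def]
    rw [this, variance_smul, hvarS]
  have hNpos : (0:ℝ) < N := by exact_mod_cast hN
  have hEZ : ∫ ω, Z ω ∂Pr = p := by
    rw [hZ_def]
    rw [integral_const_mul]
    rw [hS_def]
    rw [integral_finset_sum _ (fun i _ => (hBL2 i).integrable one_le_two)]
    simp only [hEB, Finset.sum_const, Finset.card_range, nsmul_eq_mul]
    field_simp
  set W : Θ → ℝ := fun ω => Z ω - p with hW_def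
  have hWL2 : MemLp W 2 Pr := hZL2.sub (memLp_const p)
  have hintW2 : ∫ ω, (W ω)^2 ∂Pr = variance Z Pr := by
    have := variance_eq_integral hZL2.aestronglyMeasurable.aemeasurable
    rw [this]
    apply integral_congr_ae
    filter_upwards with ω
    simp [hW_def, hEZ]
  have key := my_cs hWL2
  rw [hintW2, hvarZ] at key
  refine le_trans key ?_
  have harg : ((N:ℝ)⁻¹)^2 * (N * (p - p^2)) ≤ p / N := by
    have h1 : ((N:ℝ)⁻¹)^2 * (N * (p - p^2)) = (p - p^2) / N := by
      field_simp
    rw [h1]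
    gcongr
    nlinarith [sq_nonneg p]
  refine le_trans (Real.sqrt_le_sqrt harg) ?_
  rw [Real.sqrt_div hp_nonneg]

/-- The empirical measure of the first `N` samples `X 0 ω, …, X (N-1) ω`. -/
noncomputable def empiricalMeasure {Θ Y : Type*} [MeasurableSpace Y]
    (X : ℕ → Θ → Y) (N : ℕ) (ω : Θ) : Measure Y :=
  (N : ENNReal)⁻¹ • ∑ i ∈ Finset.range N, Measure.dirac (X i ω)

/-- if `K ⊆ Y` has covering numbers `N(K,r) ≤ C r^{-p}` on `(0,1]`, `Y` has
diameter at most `Δ`, and `X_i` are i.i.d. with law `P` supported in `K`, then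
`E[W1(P_N, P)] ≤ C_E N^{-1/(p+2)}` with `C_E` depending only on `Δ, C, p`. -/
theorem stmt14 (Δ C p : ℝ) (hΔ : 0 < Δ) (hC : 1 ≤ C) (hp : 0 ≤ p) :
    ∃ CE : ℝ, 0 < CE ∧
      ∀ (Y : Type) [MetricSpace Y] [CompactSpace Y] [Nonempty Y]
        [MeasurableSpace Y] [BorelSpace Y] (K : Set Y),
        Metric.diam (Set.univ : Set Y) ≤ Δ →
        (∀ r : ℝ, 0 < r → r ≤ 1 → ∃ F : Finset Y,
          (F.card : ℝ) ≤ C * r ^ (-p) ∧ ∀ x ∈ K, ∃ y ∈ F, dist x y < r) →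
        ∀ (Θ : Type) [MeasurableSpace Θ] (Pr : Measure Θ), IsProbabilityMeasure Pr →
          ∀ (X : ℕ → Θ → Y), (∀ i, Measurable (X i)) →
            ∀ (P : Measure Y), IsProbabilityMeasure P →
              (∀ i, Pr.map (X i) = P) →
              iIndepFun X Pr →
              (∀ᵐ y ∂P, y ∈ K) →
              ∀ N : ℕ, 1 ≤ N →
                (∫ ω, W1 (empiricalMeasure X N ω) P ∂Pr)
                  ≤ CE * (N : ℝ) ^ (-(1 / (p + 2))) := by
  classical
  refine ⟨2 + Δ * Real.sqrt (2*C), by positivity, ?_⟩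
  intro Y _ _ _ _ _ K hdiam hcov Θ _ Pr hPr X hXm P hP hlaw hindep hKae N hN
  haveI := hPr; haveI := hP
  have hNpos : (0:ℝ) < N := by exact_mod_cast hN
  have hN1 : (1:ℝ) ≤ N := by exact_mod_cast hN
  set q : ℝ := 1/(p+2) with hq_def
  have hq_pos : 0 < q := by rw [hq_def]; positivity
  set r : ℝ := (N:ℝ) ^ (-q) with hr_def
  have hrpos : 0 < r := Real.rpow_pos_of_pos hNpos _
  have hrle1 : r ≤ 1 := Real.rpow_le_one_of_one_le_of_nonpos hN1 (by linarith)
  obtain ⟨F, hFcard, hFcover⟩ := hcov r hrpos hrle1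
  set m : ℕ := F.card with hm_def
  set L : List Y := F.toList with hL_def
  have hlen : L.length = m := Finset.length_toList F
  set y : ℕ → Y := fun j => L.getD j (Classical.arbitrary Y) with hy_def
  have hymem : ∀ j, j < m → y j ∈ F := by
    intro j hj
    have hj' : j < L.length := by rw [hlen]; exact hj
    rw [hy_def]; simp only
    rw [List.getD_eq_getElem _ _ hj']
    exact Finset.mem_toList.mp (List.getElem_mem hj')
  have hsurj : ∀ z ∈ F, ∃ j, j < m ∧ y j = z := by
    intro z hz
    have : z ∈ L := Finset.mem_toList.mpr hz
    obtain ⟨n, hn, hzn⟩ := List.mem_iff_getElem.mp this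
    exact ⟨n, by rw [← hlen]; exact hn, by
      rw [hy_def]; simp only; rw [List.getD_eq_getElem _ _ hn]; exact hzn⟩
  set U : Set Y := ⋃ j ∈ Finset.range m, Metric.ball (y j) r with hU_def
  have hUmeas : MeasurableSet U :=
    MeasurableSet.biUnion (Finset.range m).countable_toSet
      (fun j _ => Metric.isOpen_ball.measurableSet)
  have hKU : K ⊆ U := by
    intro x hx
    obtain ⟨z, hzF, hdz⟩ := hFcover x hx
    obtain ⟨j, hjm, rfl⟩ := hsurj z hzF
    exact Set.mem_biUnion (Finset.mem_range.mpr hjm) (Metric.mem_ball.mpr hdz)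
  set f : ℕ → Set Y := fun j => if j < m then Metric.ball (y j) r
    else if j = m then Uᶜ else ∅ with hf_def
  have hfmeas : ∀ j, MeasurableSet (f j) := by
    intro j
    rw [hf_def]; simp only
    split
    · exact Metric.isOpen_ball.measurableSet
    · split
      · exact hUmeas.compl
      · exact MeasurableSet.empty
  have hfj : ∀ j, j < m → f j = Metric.ball (y j) r := by
    intro j hj; rw [hf_def]; simp [hj]
  have hfm : f m = Uᶜ := by rw [hf_def]; simp
  set A : ℕ → Set Y := disjointed f with hA_def
  have hAmeas : ∀ j, MeasurableSet (A j) := MeasurableSet.disjointed hfmeas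
  have hAdisj : Set.PairwiseDisjoint ↑(Finset.range (m+1)) A :=
    (disjoint_disjointed f).set_pairwise _
  have hAsub : ∀ j, A j ⊆ f j := disjointed_subset f
  have hAcover : ⋃ j ∈ Finset.range (m+1), A j = Set.univ := by
    have h1 : ⋃ j ∈ Finset.range (m+1), A j = partialSups A m := by
      rw [partialSups_eq_biSup]
      ext x
      simp [Nat.lt_succ_iff]
    have h2 : ⋃ j ∈ Finset.range (m+1), f j = partialSups f m := by
      rw [partialSups_eq_biSup]
      ext x
      simp [Nat.lt_succ_iff]
    rw [h1, hA_def, partialSups_disjointed, ← h2]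
    rw [Set.eq_univ_iff_forall]
    intro x
    by_cases hx : x ∈ U
    · rw [hU_def] at hx
      obtain ⟨j, hj, hxj⟩ := Set.mem_iUnion₂.mp hx
      refine Set.mem_biUnion (Finset.mem_range.mpr (Nat.lt_succ_of_lt (Finset.mem_range.mp hj))) ?_
      rw [hf_def]; simp only
      rw [if_pos (Finset.mem_range.mp hj)]
      exact hxj
    · refine Set.mem_biUnion (Finset.self_mem_range_succ m) ?_
      rw [hf_def]; simp only
      rw [if_neg (lt_irrefl m)]
      simpa using hx
  -- a.e. all samples are in U
  have hPU : P Uᶜ = 0 := by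
    have : ∀ᵐ z ∂P, z ∈ U := hKae.mono (fun z hz => hKU hz)
    rw [MeasureTheory.ae_iff] at this
    simpa [Set.compl_def] using this
  have hXU : ∀ᵐ ω ∂Pr, ∀ i, X i ω ∈ U := by
    rw [MeasureTheory.ae_all_iff]
    intro i
    rw [MeasureTheory.ae_iff]
    have : {ω | ¬ X i ω ∈ U} = X i ⁻¹' Uᶜ := rfl
    rw [this, ← Measure.map_apply (hXm i) hUmeas.compl, hlaw i]
    exact hPU
  -- empirical measure facts
  have hemp_prob : ∀ ω, IsProbabilityMeasure (empiricalMeasure X N ω) := by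
    intro ω
    constructor
    rw [empiricalMeasure, Measure.smul_apply, Measure.finset_sum_apply]
    simp only [Measure.dirac_apply_of_mem (Set.mem_univ _), Finset.sum_const,
      Finset.card_range, nsmul_eq_mul, mul_one, smul_eq_mul]
    rw [ENNReal.inv_mul_cancel (by exact_mod_cast Nat.pos_iff_ne_zero.mp hN : (N:ENNReal) ≠ 0)
      (ENNReal.natCast_ne_top N)]
  have hempA : ∀ ω (s : Set Y), MeasurableSet s → ((empiricalMeasure X N ω) s).toReal
      = (N:ℝ)⁻¹ * ∑ i ∈ Finset.range N, s.indicator (fun _ => (1:ℝ)) (X i ω) := by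
    intro ω s hs
    rw [empiricalMeasure, Measure.smul_apply, Measure.finset_sum_apply, smul_eq_mul,
      ENNReal.toReal_mul]
    congr 1
    · simp
    · rw [ENNReal.toReal_sum (fun i _ => by
        rw [Measure.dirac_apply' _ hs]
        by_cases h : X i ω ∈ s <;> simp [h])]
      refine Finset.sum_congr rfl fun i _ => ?_
      rw [Measure.dirac_apply' _ hs]
      by_cases h : X i ω ∈ s <;> simp [h]
  have hempnullU : ∀ ω, (∀ i, X i ω ∈ U) → (empiricalMeasure X N ω) Uᶜ = 0 := by
    intro ω hω
    rw [empiricalMeasure, Measure.smul_apply, Measure.finset_sum_apply, smul_eq_mul]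
    have : ∀ i ∈ Finset.range N, Measure.dirac (X i ω) Uᶜ = 0 := by
      intro i _
      rw [Measure.dirac_apply' _ hUmeas.compl]
      simp [hω i]
    rw [Finset.sum_congr rfl this]
    simp
  -- the dominating function
  set G : Θ → ℝ := fun ω => 2*r + Δ * ∑ j ∈ Finset.range (m+1),
    |(N:ℝ)⁻¹ * ∑ i ∈ Finset.range N, (A j).indicator (fun _ => (1:ℝ)) (X i ω)
      - (P (A j)).toReal| with hG_def
  have hae_bound : ∀ᵐ ω ∂Pr, W1 (empiricalMeasure X N ω) P ≤ G ω := by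
    filter_upwards [hXU] with ω hω
    have hsmall : ∀ j, j < m+1 →
        (∀ x ∈ A j, ∀ x' ∈ A j, dist x x' ≤ 2*r) ∨
        ((empiricalMeasure X N ω) (A j) = 0 ∧ P (A j) = 0) := by
      intro j hj
      rcases Nat.lt_succ_iff_lt_or_eq.mp hj with hjm | rfl
      · left
        intro x hx x' hx'
        have h1 : x ∈ Metric.ball (y j) r := by
          have := hAsub j hx
          rwa [hfj j hjm] at this
        have h2 : x' ∈ Metric.ball (y j) r := by
          have := hAsub j hx'
          rwa [hfj j hjm] at this
        calc dist x x' ≤ dist x (y j) + dist x' (y j) := dist_triangle_right _ _ _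
          _ ≤ r + r := add_le_add (Metric.mem_ball.mp h1).le (Metric.mem_ball.mp h2).le
          _ = 2*r := by ring
      · right
        have hsub : A m ⊆ Uᶜ := by
          refine subset_trans (hAsub m) ?_
          rw [hfm]
        constructor
        · exact measure_mono_null hsub (hempnullU ω hω)
        · exact measure_mono_null hsub hPU
    have := lemA (empiricalMeasure X N ω) P (hemp_prob ω) hP Δ hΔ.le hdiam r hrpos.le
      (m+1) A hAmeas hAdisj hAcover hsmall
    refine le_trans this ?_
    rw [hG_def]
    simp only
    refine add_le_add_right (mul_le_mul_of_nonneg_left ?_ hΔ.le) _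
    refine le_of_eq (Finset.sum_congr rfl fun j hj => ?_)
    rw [hempA ω (A j) (hAmeas j)]
  -- integrability of the dominating function
  have hterm_int : ∀ j, Integrable (fun ω =>
      |(N:ℝ)⁻¹ * ∑ i ∈ Finset.range N, (A j).indicator (fun _ => (1:ℝ)) (X i ω)
        - (P (A j)).toReal|) Pr := by
    intro j
    apply Integrable.abs
    refine Integrable.sub ?_ (integrable_const _)
    refine Integrable.const_mul ?_ _
    refine integrable_finset_sum _ (fun i _ => ?_)
    refine (MemLp.of_bound ?_ 1 ?_).integrable le_rfl
    · exact ((measurable_const.indicator (hAmeas j)).comp (hXm i)).aestronglyMeasurable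
    · refine Filter.Eventually.of_forall fun ω => ?_
      rw [Real.norm_eq_abs]
      by_cases h : X i ω ∈ A j <;> simp [Set.indicator_apply, h]
  have hG_int : Integrable G Pr := by
    rw [hG_def]
    exact (integrable_const _).add
      ((integrable_finset_sum _ (fun j _ => hterm_int j)).const_mul Δ)
  -- expectation of the dominating function
  have hsum_ub : ∑ j ∈ Finset.range (m+1), ∫ ω,
      |(N:ℝ)⁻¹ * ∑ i ∈ Finset.range N, (A j).indicator (fun _ => (1:ℝ)) (X i ω)
        - (P (A j)).toReal| ∂Pr
      ≤ Real.sqrt (2*C*r^(-p)) / Real.sqrt N := by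
    have hdev : ∀ j, ∫ ω, |(N:ℝ)⁻¹ * ∑ i ∈ Finset.range N,
        (A j).indicator (fun _ => (1:ℝ)) (X i ω) - (P (A j)).toReal| ∂Pr
        ≤ Real.sqrt ((P (A j)).toReal) / Real.sqrt N :=
      fun j => emp_dev Pr X hXm P hlaw hindep (A j) (hAmeas j) N hN
    have hPsum : ∑ j ∈ Finset.range (m+1), (P (A j)).toReal = 1 := by
      rw [← ENNReal.toReal_sum (fun j _ => measure_ne_top P _),
        ← measure_biUnion_finset hAdisj (fun j _ => hAmeas j), hAcover, measure_univ,
        ENNReal.toReal_one]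
    have hCS : ∑ j ∈ Finset.range (m+1), Real.sqrt ((P (A j)).toReal)
        ≤ Real.sqrt (m+1) := by
      have h := Finset.sum_mul_sq_le_sq_mul_sq (Finset.range (m+1)) (fun _ => (1:ℝ))
        (fun j => Real.sqrt ((P (A j)).toReal))
      simp only [one_mul, one_pow, Finset.sum_const, Finset.card_range, nsmul_eq_mul,
        mul_one] at h
      have h2 : ∑ j ∈ Finset.range (m+1), Real.sqrt ((P (A j)).toReal)^2 = 1 := by
        rw [Finset.sum_congr rfl (fun j _ => Real.sq_sqrt ENNReal.toReal_nonneg), hPsum]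
      rw [h2, mul_one] at h
      have hnn : 0 ≤ ∑ j ∈ Finset.range (m+1), Real.sqrt ((P (A j)).toReal) :=
        Finset.sum_nonneg fun j _ => Real.sqrt_nonneg _
      have h3 := Real.sqrt_le_sqrt h
      rw [Real.sqrt_sq hnn] at h3
      refine le_trans h3 (le_of_eq ?_)
      congr 1
      push_cast
      ring
    have hm2C : ((m:ℝ)+1) ≤ 2*C*r^(-p) := by
      have h1 : (1:ℝ) ≤ r^(-p) :=
        Real.one_le_rpow_of_pos_of_le_one_of_nonpos hrpos hrle1 (neg_nonpos.mpr hp)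
      nlinarith [hFcard, hrpos.le]
    calc ∑ j ∈ Finset.range (m+1), ∫ ω,
        |(N:ℝ)⁻¹ * ∑ i ∈ Finset.range N, (A j).indicator (fun _ => (1:ℝ)) (X i ω)
          - (P (A j)).toReal| ∂Pr
        ≤ ∑ j ∈ Finset.range (m+1), Real.sqrt ((P (A j)).toReal) / Real.sqrt N :=
          Finset.sum_le_sum fun j _ => hdev j
      _ = (∑ j ∈ Finset.range (m+1), Real.sqrt ((P (A j)).toReal)) / Real.sqrt N := by
          rw [Finset.sum_div]
      _ ≤ Real.sqrt (m+1) / Real.sqrt N := by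
          have hsN : (0:ℝ) < Real.sqrt N := Real.sqrt_pos.mpr hNpos
          exact (div_le_div_iff_of_pos_right hsN).mpr hCS
      _ ≤ Real.sqrt (2*C*r^(-p)) / Real.sqrt N := by
          have hsN : (0:ℝ) < Real.sqrt N := Real.sqrt_pos.mpr hNpos
          exact (div_le_div_iff_of_pos_right hsN).mpr (Real.sqrt_le_sqrt hm2C)
  have hGval : ∫ ω, G ω ∂Pr ≤ 2*r + Δ * (Real.sqrt (2*C*r^(-p)) / Real.sqrt N) := by
    rw [hG_def]
    rw [integral_add (integrable_const _)
      ((integrable_finset_sum _ (fun j _ => hterm_int j)).const_mul Δ)]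
    rw [integral_const, integral_const_mul,
      integral_finset_sum _ (fun j _ => hterm_int j)]
    simp only [measure_univ, ENNReal.toReal_one, smul_eq_mul, one_mul, probReal_univ]
    exact add_le_add_right (mul_le_mul_of_nonneg_left hsum_ub hΔ.le) _
  -- rpow arithmetic
  have hrpow : Real.sqrt (2*C*r^(-p)) / Real.sqrt N = Real.sqrt (2*C) * (N:ℝ)^(-q) := by
    have hN0 : (0:ℝ) ≤ N := hNpos.le
    have h1 : Real.sqrt (2*C*r^(-p)) = Real.sqrt (2*C) * Real.sqrt (r^(-p)) :=
      Real.sqrt_mul (by positivity) _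
    have h2 : r^(-p) = (N:ℝ)^(q*p) := by
      rw [hr_def, ← Real.rpow_mul hN0]
      congr 1
      ring
    have h3 : Real.sqrt ((N:ℝ)^(q*p)) = (N:ℝ)^(q*p/2) := by
      rw [Real.sqrt_eq_rpow, ← Real.rpow_mul hN0]
      congr 1
      ring
    have h4 : Real.sqrt (N:ℝ) = (N:ℝ)^((1:ℝ)/2) := Real.sqrt_eq_rpow _
    rw [h1, h2, h3, h4, mul_div_assoc, ← Real.rpow_sub hNpos]
    congr 2
    rw [hq_def]
    field_simp
    ring
  have hfinal : 2*r + Δ * (Real.sqrt (2*C*r^(-p)) / Real.sqrt N)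
      ≤ (2 + Δ * Real.sqrt (2*C)) * (N:ℝ) ^ (-(1/(p+2))) := by
    rw [hrpow, hr_def, hq_def]
    ring_nf
    nlinarith [Real.rpow_nonneg (le_of_lt hNpos) (-(1/(p+2))), Real.sqrt_nonneg (2*C), hΔ.le]
  by_cases hInt : Integrable (fun ω => W1 (empiricalMeasure X N ω) P) Pr
  · exact le_trans (integral_mono_ae hInt hG_int hae_bound) (le_trans hGval hfinal)
  · rw [integral_undef hInt]
    have h1 : (0:ℝ) ≤ (N:ℝ) ^ (-(1/(p+2))) := Real.rpow_nonneg hNpos.le _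
    have h2 : (0:ℝ) ≤ 2 + Δ * Real.sqrt (2*C) := by positivity
    positivity
end
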